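/- arXiv:1812.04182 — 7 statements merged into one kernel-verified Lean document; each statement's English description precedes it below -/
import Mathlib

section
/- Every multi-qubit completely symmetric state is separable: if ρ is a CS state on (ℂ²)^{⊗d} (N = 2, any number of parties d), then ρ is fully separable. -/
/-!
For qubits, complete symmetry makes `ρ I J` depend only on the total number `n` of ones in `I`
and `J`; this common value `f n` is real, and the Hankel matrix `(f (i + j))_{i, j ≤ d}` is a
principal submatrix of `ρ`, hence positive semidefinite. By the truncated moment theorem on the
projective line, `f n = ∑ₜ aₜ ^ (2d - n) * bₜ ^ n`, i.e. `ρ = ∑ₜ |vₜ⟩⟨vₜ|` with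
`vₜ = (aₜ, bₜ)^{⊗d}`.

The moment theorem is Farkas' lemma for the cone spanned by the moment vectors
`(a ^ (2d - n) * b ^ n)ₙ`, which is closed because it is the cone over a compact set avoiding
`0`. A functional that is nonnegative on this cone is a nonnegative polynomial, hence a sum of
squares of polynomials of degree `≤ d`, and the Hankel condition says exactly that the Riesz
functional `X ^ n ↦ f n` is nonnegative on such squares.
-/

open scoped ComplexOrder

/-- Completely symmetric matrix on `(ℂ^N)^{⊗d}`. -/
def IsCS {N d : ℕ} (ρ : Matrix (Fin d → Fin N) (Fin d → Fin N) ℂ) : Prop :=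
  ∀ (π : Equiv.Perm (Fin d ⊕ Fin d)) (I J : Fin d → Fin N),
    ρ (fun k => Sum.elim I J (π (Sum.inl k))) (fun k => Sum.elim I J (π (Sum.inr k))) = ρ I J

/-- Full separability: `ρ` is a sum of projections onto product vectors. -/
def FullySep {N d : ℕ} (ρ : Matrix (Fin d → Fin N) (Fin d → Fin N) ℂ) : Prop :=
  ∃ (m : ℕ) (x : Fin m → Fin d → Fin N → ℂ),
    (∀ t k, x t k ≠ 0) ∧
    ∀ I J, ρ I J = ∑ t, (∏ k, x t k (I k)) * star (∏ k, x t k (J k))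

open Set Filter Topology Polynomial
open scoped RealInnerProductSpace Matrix

theorem eq_zero_of_forall_sub_mul_nonneg {g : ℝ → ℝ} {r : ℝ} (hg : ContinuousAt g r)
    (h : ∀ x, 0 ≤ (x - r) * g x) : g r = 0 := by
  refine le_antisymm (le_of_tendsto (hg.tendsto.mono_left (nhdsWithin_le_nhds (s := Iio r))) ?_)
    (ge_of_tendsto (hg.tendsto.mono_left (nhdsWithin_le_nhds (s := Ioi r))) ?_)
  · filter_upwards [self_mem_nhdsWithin] with x (hx : x < r)
    exact nonpos_of_mul_nonneg_right (h x) (sub_neg.2 hx)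
  · filter_upwards [self_mem_nhdsWithin] with x (hx : r < x)
    exact nonneg_of_mul_nonneg_right (h x) (sub_pos.2 hx)

theorem nonneg_of_forall_ne_nonneg {g : ℝ → ℝ} {r : ℝ} (hg : ContinuousAt g r)
    (h : ∀ x ≠ r, 0 ≤ g x) : 0 ≤ g r :=
  ge_of_tendsto (hg.tendsto.mono_left (nhdsWithin_le_nhds (s := {r}ᶜ)))
    (eventually_nhdsWithin_of_forall h)

namespace Polynomial

/-- The factor `(X - a) ^ 2 + b ^ 2` is a real double root (`b = 0`) or a pair of conjugate
complex roots. -/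
theorem exists_eq_mul_of_forall_eval_nonneg {P : ℝ[X]} (hP : ∀ x, 0 ≤ P.eval x)
    (hdeg : 0 < P.natDegree) :
    ∃ (a b : ℝ) (R : ℝ[X]), P = ((X - C a) ^ 2 + C (b ^ 2)) * R ∧ ∀ x, 0 ≤ R.eval x := by
  obtain ⟨z, hz⟩ := IsAlgClosed.exists_aeval_eq_zero ℂ P
    (by rw [degree_eq_natDegree (ne_zero_of_natDegree_gt hdeg)]; exact_mod_cast hdeg.ne')
  by_cases him : z.im = 0
  · have hroot : P.IsRoot z.re := by
      rw [← Complex.re_add_im z, him, Complex.ofReal_zero, zero_mul, add_zero] at hz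
      rwa [← Complex.coe_algebraMap, aeval_algebraMap_apply, map_eq_zero] at hz
    obtain ⟨Q, rfl⟩ := dvd_iff_isRoot.2 hroot
    have hQ : Q.IsRoot z.re :=
      eq_zero_of_forall_sub_mul_nonneg Q.continuous.continuousAt (by simpa using hP)
    obtain ⟨R, rfl⟩ := dvd_iff_isRoot.2 hQ
    have hR : ∀ x ≠ z.re, 0 ≤ R.eval x := fun x hx =>
      nonneg_of_mul_nonneg_right (a := (x - z.re) ^ 2)
        (by simpa [← mul_assoc, ← sq] using hP x) (by positivity [sub_ne_zero.2 hx])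
    refine ⟨z.re, 0, R, by simp [sq, mul_assoc], fun x => ?_⟩
    rcases eq_or_ne x z.re with rfl | hx
    · exact nonneg_of_forall_ne_nonneg R.continuous.continuousAt hR
    · exact hR x hx
  · obtain ⟨R, hR⟩ := quadratic_dvd_of_aeval_eq_zero_im_ne_zero P hz him
    have hq : X ^ 2 - C (2 * z.re) * X + C (‖z‖ ^ 2) = (X - C z.re) ^ 2 + C (z.im ^ 2) := by
      rw [Complex.sq_norm, Complex.normSq_apply]
      simp only [map_add, map_mul, map_ofNat, map_pow]
      ring
    refine ⟨z.re, z.im, R, hq ▸ hR, fun x => nonneg_of_mul_nonneg_right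
      (a := (x - z.re) ^ 2 + z.im ^ 2) (by simpa [hq ▸ hR] using hP x) (by positivity)⟩

theorem exists_sum_sq_of_forall_eval_nonneg (n : ℕ) {P : ℝ[X]} (hdeg : P.natDegree ≤ 2 * n)
    (hP : ∀ x, 0 ≤ P.eval x) :
    ∃ s : Multiset ℝ[X], (∀ Q ∈ s, Q.natDegree ≤ n) ∧ P = (s.map (· ^ 2)).sum := by
  induction n generalizing P with
  | zero =>
    have hC : P = C (P.coeff 0) := eq_C_of_natDegree_le_zero hdeg
    have h0 : 0 ≤ P.coeff 0 := by simpa [← coeff_zero_eq_eval_zero] using hP 0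
    refine ⟨{C √(P.coeff 0)}, by simp, ?_⟩
    rw [Multiset.map_singleton, Multiset.sum_singleton, ← C_pow, Real.sq_sqrt h0, ← hC]
  | succ n ih =>
    rcases le_or_gt P.natDegree (2 * n) with h | h
    · obtain ⟨s, hs, hPs⟩ := ih h hP
      exact ⟨s, fun Q hQ => (hs Q hQ).trans n.le_succ, hPs⟩
    obtain ⟨a, b, R, rfl, hR⟩ := exists_eq_mul_of_forall_eval_nonneg hP (by omega)
    have hq : ((X - C a) ^ 2 + C (b ^ 2)).Monic :=
      ((monic_X_sub_C a).pow 2).add_of_left (by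
        rw [degree_pow, degree_X_sub_C]; exact (degree_C_le).trans_lt (by norm_num))
    have hR0 : R ≠ 0 := by rintro rfl; simp at h
    rw [hq.natDegree_mul' hR0, natDegree_add_C, natDegree_pow, natDegree_X_sub_C] at hdeg
    obtain ⟨s, hs, rfl⟩ := ih (by omega) hR
    refine ⟨s.map ((X - C a) * ·) + s.map (C b * ·), ?_, ?_⟩
    · simp only [Multiset.mem_add, Multiset.mem_map]
      rintro _ (⟨Q, hQ, rfl⟩ | ⟨Q, hQ, rfl⟩)
      · exact natDegree_mul_le.trans (by rw [natDegree_X_sub_C]; linarith [hs Q hQ])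
      · exact (natDegree_C_mul_le b Q).trans ((hs Q hQ).trans n.le_succ)
    · simp only [Multiset.map_add, Multiset.map_map, Function.comp_def, mul_pow,
        Multiset.sum_add, Multiset.sum_map_mul_left, C_pow, add_mul]

end Polynomial

def hankelMatrix (d : ℕ) (f : ℕ → ℝ) : Matrix (Fin (d + 1)) (Fin (d + 1)) ℝ :=
  Matrix.of fun i j => f (i + j)

noncomputable def rieszFunctional (f : ℕ → ℝ) : ℝ[X] →ₗ[ℝ] ℝ :=
  lsum fun n => f n • LinearMap.id

theorem rieszFunctional_monomial (f : ℕ → ℝ) (n : ℕ) (a : ℝ) :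
    rieszFunctional f (monomial n a) = a * f n := by
  simp [rieszFunctional, mul_comm]

section Hankel

variable {d : ℕ} {f : ℕ → ℝ} (hf : (hankelMatrix d f).PosSemidef)
include hf

theorem rieszFunctional_sq_nonneg {Q : ℝ[X]} (hQ : Q.natDegree ≤ d) :
    0 ≤ rieszFunctional f (Q ^ 2) := by
  have hQsum : Q = ∑ i : Fin (d + 1), monomial i (Q.coeff i) := by
    rw [Fin.sum_univ_eq_sum_range (fun i => monomial i (Q.coeff i))]
    exact Q.as_sum_range' _ (Nat.lt_succ_of_le hQ)
  refine (hf.dotProduct_mulVec_nonneg fun i => Q.coeff i).trans_eq (Eq.symm ?_)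
  rw [sq]
  conv_lhs => rw [hQsum, Finset.sum_mul_sum, map_sum]
  refine Finset.sum_congr rfl fun i _ => ?_
  rw [map_sum, Matrix.mulVec, dotProduct, Finset.mul_sum]
  refine Finset.sum_congr rfl fun j _ => ?_
  rw [monomial_mul_monomial, rieszFunctional_monomial]
  simp only [hankelMatrix, Matrix.of_apply, star_trivial]
  ring

theorem rieszFunctional_nonneg {P : ℝ[X]} (hdeg : P.natDegree ≤ 2 * d)
    (hP : ∀ x, 0 ≤ P.eval x) : 0 ≤ rieszFunctional f P := by
  obtain ⟨s, hs, rfl⟩ := exists_sum_sq_of_forall_eval_nonneg d hdeg hP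
  rw [map_multiset_sum, Multiset.map_map]
  exact Multiset.sum_nonneg fun _ hx => by
    obtain ⟨Q, hQ, rfl⟩ := Multiset.mem_map.1 hx
    exact rieszFunctional_sq_nonneg hf (hs Q hQ)

end Hankel

section ConvexHull

open Module

variable {E : Type*} [AddCommGroup E] [Module ℝ E] [FiniteDimensional ℝ E]

theorem convexHull_eq_image_stdSimplex (K : Set E) :
    convexHull ℝ K = (fun wy : (Fin (finrank ℝ E + 1) → ℝ) × (Fin (finrank ℝ E + 1) → E) =>
      ∑ i, wy.1 i • wy.2 i) '' (stdSimplex ℝ _ ×ˢ univ.pi fun _ => K) := by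
  refine Subset.antisymm (fun x hx => ?_) ?_
  · obtain ⟨ι, _, z, w, hzK, hz, hw0, hw1, rfl⟩ := eq_pos_convex_span_of_mem_convexHull hx
    obtain ⟨i₀⟩ : Nonempty ι := by
      by_contra h
      simp [not_nonempty_iff.1 h] at hw1
    obtain ⟨e⟩ : Nonempty (ι ↪ Fin (finrank ℝ E + 1)) :=
      Function.Embedding.nonempty_of_card_le (by
        simpa using hz.card_le_finrank_succ.trans (Nat.add_le_add_right (Submodule.finrank_le _) 1))
    classical
    -- pad the Carathéodory combination with zero weights
    have hzero : ∀ j ∉ range e, Function.extend e w 0 j = 0 := fun j hj =>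
      Function.extend_apply' _ _ _ hj
    refine ⟨(Function.extend e w 0, Function.extend e z fun _ => z i₀),
      ⟨⟨fun j => ?_, ?_⟩, fun j _ => ?_⟩, ?_⟩
    · dsimp only
      rcases em (j ∈ range e) with ⟨i, rfl⟩ | hj
      · exact (e.injective.extend_apply w 0 i).symm ▸ (hw0 i).le
      · exact (hzero j hj).ge
    · rw [← hw1]
      exact (Fintype.sum_of_injective e e.injective _ _ hzero
        fun i => (e.injective.extend_apply w 0 i).symm).symm
    · dsimp only
      rcases em (j ∈ range e) with ⟨i, rfl⟩ | hj
      · rw [e.injective.extend_apply]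
        exact hzK (mem_range_self i)
      · rw [Function.extend_apply' _ _ _ hj]
        exact hzK (mem_range_self i₀)
    · refine (Fintype.sum_of_injective e e.injective _ _ (fun j hj => ?_) fun i => ?_).symm
      · simp only [hzero j hj, zero_smul]
      · simp only [e.injective.extend_apply]
  · rintro _ ⟨⟨w, y⟩, ⟨hw, hy⟩, rfl⟩
    exact (convex_convexHull ℝ K).sum_mem (fun i _ => hw.1 i) hw.2
      fun i _ => subset_convexHull ℝ K (hy i (mem_univ i))

theorem IsCompact.convexHull [TopologicalSpace E] [IsTopologicalAddGroup E]
    [ContinuousSMul ℝ E] {K : Set E} (hK : IsCompact K) : IsCompact (convexHull ℝ K) := by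
  rw [convexHull_eq_image_stdSimplex]
  exact ((isCompact_stdSimplex ℝ _).prod (isCompact_univ_pi fun _ => hK)).image
    (continuous_finsetSum _ fun i _ =>
      ((continuous_apply i).comp continuous_fst).smul ((continuous_apply i).comp continuous_snd))

end ConvexHull

theorem IsCompact.isClosed_image_smul_Ici {E : Type*} [NormedAddCommGroup E] [NormedSpace ℝ E]
    {K : Set E} (hK : IsCompact K) (h0 : (0 : E) ∉ K) :
    IsClosed ((fun p : ℝ × E => p.1 • p.2) '' (Ici 0 ×ˢ K)) := by
  obtain ⟨δ, hδ, hball⟩ := Metric.isOpen_iff.1 hK.isClosed.isOpen_compl 0 h0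
  have hδK : ∀ k ∈ K, δ ≤ ‖k‖ := fun k hk => by
    by_contra! h
    exact hball (mem_ball_zero_iff.2 h) hk
  refine isClosed_of_closure_subset fun x hx => ?_
  obtain ⟨u, hu, hux⟩ := mem_closure_iff_seq_limit.1 hx
  set B := (‖x‖ + 1) / δ
  have hT : IsClosed ((fun p : ℝ × E => p.1 • p.2) '' (Icc 0 B ×ˢ K)) :=
    ((isCompact_Icc.prod hK).image continuous_smul).isClosed
  have hxT := hT.mem_of_tendsto hux <| by
    filter_upwards [hux.norm.eventually_lt_const (lt_add_one ‖x‖)] with n hn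
    obtain ⟨⟨r, k⟩, ⟨hr, hk⟩, hrk⟩ := hu n
    refine ⟨(r, k), ⟨⟨hr, ?_⟩, hk⟩, hrk⟩
    rw [le_div_iff₀ hδ]
    calc r * δ ≤ r * ‖k‖ := mul_le_mul_of_nonneg_left (hδK k hk) hr
      _ = ‖u n‖ := by rw [← hrk, norm_smul, Real.norm_of_nonneg hr]
      _ ≤ ‖x‖ + 1 := hn.le
  obtain ⟨⟨r, k⟩, ⟨hr, hk⟩, hrk⟩ := hxT
  exact ⟨(r, k), ⟨hr.1, hk⟩, hrk⟩

section Moment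

variable (d : ℕ)

noncomputable def momentVec (p : ℝ × ℝ) : EuclideanSpace ℝ (Fin (2 * d + 1)) :=
  WithLp.toLp 2 fun n => p.1 ^ (2 * d - n) * p.2 ^ (n : ℕ)

@[simp]
theorem momentVec_apply (p : ℝ × ℝ) (n : Fin (2 * d + 1)) :
    momentVec d p n = p.1 ^ (2 * d - n) * p.2 ^ (n : ℕ) := rfl

theorem continuous_momentVec : Continuous (momentVec d) :=
  (PiLp.continuous_toLp 2 _).comp
    (continuous_pi fun _ => (continuous_fst.pow _).mul (continuous_snd.pow _))

theorem momentVec_smul (c : ℝ) (p : ℝ × ℝ) :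
    momentVec d (c • p) = c ^ (2 * d) • momentVec d p := by
  ext n
  simp only [momentVec_apply, Prod.smul_fst, Prod.smul_snd, smul_eq_mul, PiLp.smul_apply, mul_pow]
  rw [← pow_sub_mul_pow c (Nat.lt_succ_iff.1 n.isLt)]
  ring

theorem zero_notMem_convexHull_momentVec :
    (0 : EuclideanSpace ℝ (Fin (2 * d + 1))) ∉ convexHull ℝ (momentVec d '' Metric.sphere 0 1) := by
  set φ : EuclideanSpace ℝ (Fin (2 * d + 1)) →L[ℝ] ℝ :=
    (EuclideanSpace.proj (𝕜 := ℝ) (0 : Fin (2 * d + 1)) +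
      EuclideanSpace.proj (Fin.last (2 * d)) : _ →L[ℝ] ℝ)
  have hK : momentVec d '' Metric.sphere 0 1 ⊆ {v | 0 < φ v} := by
    rintro _ ⟨p, hp, rfl⟩
    have hp0 : p ≠ 0 := Metric.ne_of_mem_sphere hp one_ne_zero
    simp only [φ, add_apply, PiLp.proj_apply, mem_ofPred_eq, momentVec_apply,
      Fin.coe_ofNat_eq_mod, Nat.zero_mod, tsub_zero, pow_zero, mul_one, Fin.val_last, tsub_self,
      one_mul]
    have hev := even_two_mul d
    obtain h | h : p.1 ≠ 0 ∨ p.2 ≠ 0 := by contrapose! hp0; exact Prod.ext hp0.1 hp0.2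
    · exact add_pos_of_pos_of_nonneg (hev.pow_pos h) (hev.pow_nonneg _)
    · exact add_pos_of_nonneg_of_pos (hev.pow_nonneg _) (hev.pow_pos h)
  intro h
  simpa [φ] using convexHull_min hK (convex_halfSpace_gt φ.toLinearMap.isLinear 0) h

theorem momentVec_mem_hull {p : ℝ × ℝ} (hp : p ≠ 0) :
    momentVec d p ∈ ConvexCone.hull ℝ (convexHull ℝ (momentVec d '' Metric.sphere 0 1)) := by
  have hnorm : 0 < ‖p‖ := norm_pos_iff.2 hp
  rw [ConvexCone.mem_hull_of_convex (convex_convexHull ℝ _)]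
  refine ⟨‖p‖ ^ (2 * d), by positivity, momentVec d (‖p‖⁻¹ • p),
    subset_convexHull ℝ _ ⟨_, ?_, rfl⟩, ?_⟩
  · simp [norm_smul, inv_mul_cancel₀ hnorm.ne']
  · dsimp only
    rw [← momentVec_smul, smul_inv_smul₀ hnorm.ne']

variable {d} {f : ℕ → ℝ}

theorem toLp_mem_image_smul_convexHull_momentVec
    (hf : (hankelMatrix d f).PosSemidef) :
    WithLp.toLp 2 (fun n : Fin (2 * d + 1) => f n) ∈ (fun p : ℝ × _ => p.1 • p.2) ''
      (Ici 0 ×ˢ convexHull ℝ (momentVec d '' Metric.sphere 0 1)) := by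
  set K := momentVec d '' Metric.sphere 0 1
  set C := ConvexCone.hull ℝ (convexHull ℝ K)
  have hC : (C : Set _) ⊆ (fun p : ℝ × _ => p.1 • p.2) '' (Ici 0 ×ˢ convexHull ℝ K) := by
    intro x hx
    obtain ⟨r, hr, y, hy, rfl⟩ := (ConvexCone.mem_hull_of_convex (convex_convexHull ℝ K)).1 hx
    exact ⟨(r, y), ⟨hr.le, hy⟩, rfl⟩
  refine closure_minimal hC (((isCompact_sphere 0 1).image (continuous_momentVec d)).convexHull
    |>.isClosed_image_smul_Ici (zero_notMem_convexHull_momentVec d)) ?_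
  by_contra hv
  obtain ⟨D, hD⟩ : ∃ D : ProperCone ℝ (EuclideanSpace ℝ (Fin (2 * d + 1))),
      (D : ConvexCone ℝ (EuclideanSpace ℝ (Fin (2 * d + 1)))) = C.closure :=
    CanLift.prf _ ⟨⟨_, subset_closure (momentVec_mem_hull d (p := (1, 0)) (by simp))⟩,
      isClosed_closure⟩
  have hDC : ∀ x, x ∈ D ↔ x ∈ closure (C : Set _) := fun x => by
    rw [← ConvexCone.mem_closure, ← hD]
    rfl
  have hmem : ∀ x : ℝ, momentVec d (1, x) ∈ D := fun x =>
    (hDC _).2 (subset_closure (momentVec_mem_hull d (by simp)))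
  obtain ⟨Y, hY, hvY⟩ := D.hyperplane_separation'
    (x₀ := WithLp.toLp 2 fun n : Fin (2 * d + 1) => f n) (mt (hDC _).1 hv)
  set P : ℝ[X] := ∑ n : Fin (2 * d + 1), monomial n (Y n)
  have hP : ∀ x, 0 ≤ P.eval x := fun x => by
    convert hY _ (hmem x) using 1
    simp [P, PiLp.inner_apply, eval_finsetSum, mul_comm]
  have hdeg : P.natDegree ≤ 2 * d := natDegree_sum_le_of_forall_le _ _ fun n _ =>
    (natDegree_monomial_le _).trans (Nat.lt_succ_iff.1 n.isLt)
  have hPY : rieszFunctional f P = ⟪WithLp.toLp 2 fun n : Fin (2 * d + 1) => f n, Y⟫ := by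
    simp [P, rieszFunctional_monomial, PiLp.inner_apply, mul_comm]
  linarith [rieszFunctional_nonneg hf hdeg hP]

/-- The truncated moment theorem on the projective line. -/
theorem exists_sum_momentVec (hf : (hankelMatrix d f).PosSemidef) :
    ∃ (ι : Type) (_ : Fintype ι) (c : ι → ℝ) (p : ι → ℝ × ℝ), (∀ t, 0 < c t) ∧ (∀ t, p t ≠ 0) ∧
      ∀ n : Fin (2 * d + 1), f n = ∑ t, c t * momentVec d (p t) n := by
  obtain ⟨⟨r, k⟩, ⟨hr, hk⟩, hrk⟩ := toLp_mem_image_smul_convexHull_momentVec hf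
  have hf_eq : ∀ n : Fin (2 * d + 1), f n = r * k n := fun n => by
    simpa using (congrArg (· n) hrk).symm
  rcases (show (0 : ℝ) ≤ r from hr).eq_or_lt with rfl | hr_pos
  · exact ⟨Empty, inferInstance, Empty.elim, Empty.elim, (·.elim), (·.elim), by simpa using hf_eq⟩
  obtain ⟨ι, _, z, w, hzK, -, hw0, -, rfl⟩ := eq_pos_convex_span_of_mem_convexHull hk
  choose p hp hpz using fun i => hzK (mem_range_self i)
  refine ⟨ι, inferInstance, fun i => r * w i, p, fun i => mul_pos hr_pos (hw0 i),
    fun i => Metric.ne_of_mem_sphere (hp i) one_ne_zero, fun n => ?_⟩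
  simp [hf_eq, hpz, Finset.mul_sum, mul_assoc]

theorem exists_sum_momentVec_of_pos (hd : 0 < d) (hf : (hankelMatrix d f).PosSemidef) :
    ∃ (ι : Type) (_ : Fintype ι) (p : ι → ℝ × ℝ), (∀ t, p t ≠ 0) ∧
      ∀ n : Fin (2 * d + 1), f n = ∑ t, momentVec d (p t) n := by
  obtain ⟨ι, _, c, p, hc, hp, hf_eq⟩ := exists_sum_momentVec hf
  -- `momentVec d` is homogeneous of degree `2 d`, so rescaling `p t` absorbs the weight `c t`
  refine ⟨ι, inferInstance, fun t => (c t) ^ ((2 * d : ℕ) : ℝ)⁻¹ • p t,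
    fun t => smul_ne_zero (Real.rpow_pos_of_pos (hc t) _).ne' (hp t), fun n => ?_⟩
  simp only [hf_eq, momentVec_smul, Real.rpow_inv_natCast_pow (hc _).le (by omega : 2 * d ≠ 0),
    PiLp.smul_apply, smul_eq_mul]

end Moment

section Weight

open Finset

variable {α β γ : Type*} [Fintype α] [Fintype β] [Fintype γ]

def weight (h : γ → Fin 2) : ℕ := #{x | h x = 1}

theorem weight_le {d : ℕ} (I : Fin d → Fin 2) : weight I ≤ d :=
  (card_filter_le _ _).trans_eq (card_fin d)

theorem card_filter_ne_zero_eq_weight (h : γ → Fin 2) : #{x | h x ≠ 0} = weight h := by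
  refine congrArg card (filter_congr fun x _ => ⟨Fin.eq_one_of_ne_zero _, ?_⟩)
  rintro h1
  simp [h1]

theorem card_filter_eq_zero_eq_card_sub_weight (h : γ → Fin 2) :
    #{x | h x = 0} = Fintype.card γ - weight h := by
  rw [← card_filter_ne_zero_eq_weight, ← card_univ]
  exact Nat.eq_sub_of_add_eq (card_filter_add_card_filter_not _)

theorem weight_sumElim (I : α → Fin 2) (J : β → Fin 2) :
    weight (Sum.elim I J) = weight I + weight J := by
  simp only [weight, card_filter, Fintype.sum_sum_type, Sum.elim_inl, Sum.elim_inr]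
  rfl

theorem exists_perm_comp_eq_of_weight_eq {h h' : γ → Fin 2} (hw : weight h = weight h') :
    ∃ π : Equiv.Perm γ, h ∘ π = h' := by
  have hcard : ∀ c, Fintype.card {x // h' x = c} = Fintype.card {x // h x = c} := fun c => by
    rw [Fintype.card_subtype, Fintype.card_subtype]
    fin_cases c
    · simp only [Fin.zero_eta, card_filter_eq_zero_eq_card_sub_weight, hw]
    · exact hw.symm
  exact ⟨Equiv.ofFiberEquiv fun c => Fintype.equivOfCardEq (hcard c),
    funext (Equiv.ofFiberEquiv_map _)⟩

theorem prod_comp_eq_pow_weight {M : Type*} [CommMonoid M] (v : Fin 2 → M) (h : γ → Fin 2) :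
    ∏ x, v (h x) = v 0 ^ (Fintype.card γ - weight h) * v 1 ^ weight h := by
  rw [← card_filter_eq_zero_eq_card_sub_weight, ← card_filter_ne_zero_eq_weight,
    ← prod_filter_mul_prod_filter_not univ (fun x => h x = 0)]
  congr 1 <;> refine prod_eq_pow_card fun x hx => congrArg v ?_
  · exact (mem_filter.1 hx).2
  · exact Fin.eq_one_of_ne_zero _ (mem_filter.1 hx).2

def firstOnes (d n : ℕ) : Fin d → Fin 2 := fun k => if (k : ℕ) < n then 1 else 0

theorem weight_firstOnes (d n : ℕ) : weight (firstOnes d n) = min d n := by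
  simp [weight, firstOnes, Fin.card_filter_val_lt]

end Weight

namespace IsCS

variable {N d : ℕ} {ρ : Matrix (Fin d → Fin N) (Fin d → Fin N) ℂ}

theorem apply_comm (hρ : IsCS ρ) (I J : Fin d → Fin N) : ρ J I = ρ I J := by
  simpa using hρ (Equiv.sumComm _ _) I J

theorem apply_eq_of_comp_eq (hρ : IsCS ρ) (π : Equiv.Perm (Fin d ⊕ Fin d))
    {I J I' J' : Fin d → Fin N} (h : Sum.elim I J ∘ π = Sum.elim I' J') : ρ I' J' = ρ I J := by
  rw [← hρ π I J]
  congr <;> funext k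
  · exact (congrFun h (.inl k)).symm
  · exact (congrFun h (.inr k)).symm

theorem ofReal_re_apply (hρ : IsCS ρ) (hH : ρ.IsHermitian) (I J : Fin d → Fin N) :
    ((ρ I J).re : ℂ) = ρ I J :=
  Complex.conj_eq_iff_re.1 (by simpa [hρ.apply_comm] using hH.apply I J)

end IsCS

theorem Matrix.PosSemidef.of_map_ofReal {n : Type*} [Fintype n] {A : Matrix n n ℝ}
    (h : (A.map ((↑) : ℝ → ℂ)).PosSemidef) : A.PosSemidef := by
  refine .of_dotProduct_mulVec_nonneg ?_ fun x => ?_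
  · ext i j
    simpa using congrFun₂ h.1 i j
  · have hx : star (fun i => (x i : ℂ)) ⬝ᵥ (A.map ((↑) : ℝ → ℂ) *ᵥ fun i => (x i : ℂ)) =
        ((star x ⬝ᵥ (A *ᵥ x) : ℝ) : ℂ) := by
      simp [dotProduct, Matrix.mulVec]
    exact_mod_cast hx ▸ h.dotProduct_mulVec_nonneg _

section Qubit

variable {d : ℕ} {ρ : Matrix (Fin d → Fin 2) (Fin d → Fin 2) ℂ}

theorem IsCS.apply_eq_of_weight_add_eq (hρ : IsCS ρ) {I J I' J' : Fin d → Fin 2}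
    (h : weight I + weight J = weight I' + weight J') : ρ I J = ρ I' J' := by
  obtain ⟨π, hπ⟩ := exists_perm_comp_eq_of_weight_eq (h := Sum.elim I J) (h' := Sum.elim I' J')
    (by rw [weight_sumElim, weight_sumElim, h])
  exact (hρ.apply_eq_of_comp_eq π hπ).symm

/-- The common value of the entries `ρ I J` of a completely symmetric qubit matrix with `n` ones
in `I` and `J` together. -/
noncomputable def csProfile (ρ : Matrix (Fin d → Fin 2) (Fin d → Fin 2) ℂ) (n : ℕ) : ℝ :=
  (ρ (firstOnes d n) (firstOnes d (n - d))).re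

theorem IsCS.apply_eq_csProfile (hρ : IsCS ρ) (hH : ρ.IsHermitian) (I J : Fin d → Fin 2) :
    ρ I J = csProfile ρ (weight I + weight J) := by
  have hI := weight_le I
  have hJ := weight_le J
  rw [csProfile, hρ.ofReal_re_apply hH, hρ.apply_eq_of_weight_add_eq]
  rw [weight_firstOnes, weight_firstOnes]
  omega

theorem posSemidef_hankelMatrix_csProfile (hpsd : ρ.PosSemidef) (hρ : IsCS ρ) :
    (hankelMatrix d (csProfile ρ)).PosSemidef := by
  refine .of_map_ofReal ?_
  convert hpsd.submatrix fun a : Fin (d + 1) => firstOnes d a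
  ext a b
  rw [Matrix.submatrix_apply, hρ.apply_eq_csProfile hpsd.isHermitian, weight_firstOnes,
    weight_firstOnes, min_eq_right (Nat.lt_succ_iff.1 a.isLt),
    min_eq_right (Nat.lt_succ_iff.1 b.isLt)]
  rfl

end Qubit

theorem FullySep.of_fintype {N d : ℕ} {ρ : Matrix (Fin d → Fin N) (Fin d → Fin N) ℂ}
    {ι : Type*} [Fintype ι] (x : ι → Fin d → Fin N → ℂ) (hx : ∀ t k, x t k ≠ 0)
    (hρ : ∀ I J, ρ I J = ∑ t, (∏ k, x t k (I k)) * star (∏ k, x t k (J k))) : FullySep ρ :=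
  ⟨Fintype.card ι, fun t => x ((Fintype.equivFin ι).symm t), fun _ _ => hx _ _,
    fun I J => (hρ I J).trans (Equiv.sum_comp (Fintype.equivFin ι).symm _).symm⟩

theorem fullySep_zero_of_trace_eq_one {N : ℕ} {ρ : Matrix (Fin 0 → Fin N) (Fin 0 → Fin N) ℂ}
    (htr : ρ.trace = 1) : FullySep ρ := by
  refine ⟨1, fun _ k => k.elim0, fun _ k => k.elim0, fun I J => ?_⟩
  have hI : ρ I J = ρ.trace := by
    simp [Matrix.trace, Subsingleton.elim I default, Subsingleton.elim J default]
  simp [hI, htr]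

theorem momentVec_weight_add_eq_prod_mul_prod {d : ℕ} (p : ℝ × ℝ) (I J : Fin d → Fin 2)
    (h : weight I + weight J < 2 * d + 1) :
    momentVec d p ⟨weight I + weight J, h⟩ =
      (∏ k, ![p.1, p.2] (I k)) * ∏ k, ![p.1, p.2] (J k) := by
  have hI := weight_le I
  have hJ := weight_le J
  rw [momentVec_apply, prod_comp_eq_pow_weight, prod_comp_eq_pow_weight, Fintype.card_fin,
    show 2 * d - (weight I + weight J) = (d - weight I) + (d - weight J) by omega]
  simp only [Matrix.cons_val_zero, Matrix.cons_val_one, pow_add]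
  ring

/-- Every multi-qubit completely symmetric state is fully separable. -/
theorem stmt_2 {d : ℕ} (ρ : Matrix (Fin d → Fin 2) (Fin d → Fin 2) ℂ)
    (hpsd : ρ.PosSemidef) (htr : ρ.trace = 1) (hCS : IsCS ρ) :
    FullySep ρ := by
  rcases Nat.eq_zero_or_pos d with rfl | hd
  · exact fullySep_zero_of_trace_eq_one htr
  obtain ⟨ι, _, p, hp, hprofile⟩ :=
    exists_sum_momentVec_of_pos hd (posSemidef_hankelMatrix_csProfile hpsd hCS)
  refine FullySep.of_fintype (fun t _ j => ((![(p t).1, (p t).2] j : ℝ) : ℂ))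
    (fun t _ hx => hp t (Prod.ext (by simpa using congrFun hx 0) (by simpa using congrFun hx 1)))
    fun I J => ?_
  have hw : weight I + weight J < 2 * d + 1 := by linarith [weight_le I, weight_le J]
  rw [hCS.apply_eq_csProfile hpsd.isHermitian, hprofile ⟨_, hw⟩, Complex.ofReal_sum]
  refine Finset.sum_congr rfl fun t _ => ?_
  rw [momentVec_weight_add_eq_prod_mul_prod]
  simp
end

section
/- Every 2 ⊗ N state that is invariant under partial transpose of the first factor is separable: if ρ is a positive semidefinite complex matrix indexed by (Fin 2 × Fin N) × (Fin 2 × Fin N) with trace 1 satisfying ρ((i,k),(j,l)) = ρ((j,k),(i,l)) for all i,j ∈ Fin 2 and k,l ∈ Fin N, then there is a finite family of nonzero vectors x_t ∈ ℂ², y_t ∈ ℂ^N with ρ((i,k),(j,l)) = ∑_t x_t(i)y_t(k)·conj(x_t(j)y_t(l)) for all i,k,j,l. -/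
/-!
Write `ρ` in blocks `[[A, B], [B', C]]` over the first factor. Invariance under partial
transpose says `B' = B`, so `B` is Hermitian. Let `S = A^{1/2}` and let `T` be its
pseudo-inverse. Positivity of `ρ` puts `B` inside the range of `A`, so `B = S H S` for the
Hermitian matrix `H = T B T`. Diagonalise `H = U diag(t) U*` and put `V = S U`. Then `A = V V*`
and `B = V diag(t) V*`, while the Schur complement `C - B T² B = C - V diag(t²) V*` is positive
semidefinite, hence of the form `W W*`. If `v_j`, `w_j` are the columns of `V`, `W`, this gives
`ρ = ∑ⱼ (1, tⱼ)(1, tⱼ)* ⊗ vⱼvⱼ* + ∑ⱼ (0, 1)(0, 1)* ⊗ wⱼwⱼ*`.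
-/

open scoped ComplexOrder MatrixOrder

namespace Matrix

variable {l m n 𝕜 : Type*} [RCLike 𝕜] [Fintype m] [Fintype n]

theorem PosSemidef.exists_eq_mul_conjTranspose [DecidableEq n] {M : Matrix n n 𝕜}
    (hM : M.PosSemidef) : ∃ W : Matrix n n 𝕜, M = W * Wᴴ := by
  obtain ⟨G, rfl⟩ := CStarAlgebra.nonneg_iff_eq_star_mul_self.mp hM.nonneg
  exact ⟨Gᴴ, by rw [conjTranspose_conjTranspose]; rfl⟩

theorem PosSemidef.mul_eq_zero_of_conjTranspose_mul_mul_eq_zero [DecidableEq n]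
    {M : Matrix n n 𝕜} (hM : M.PosSemidef) {Y : Matrix n l 𝕜} (h : Yᴴ * M * Y = 0) :
    M * Y = 0 := by
  obtain ⟨W, rfl⟩ := hM.exists_eq_mul_conjTranspose
  have hWY : Wᴴ * Y = 0 := by
    rw [← conjTranspose_mul_self_eq_zero, conjTranspose_mul, conjTranspose_conjTranspose, ← h]
    simp only [Matrix.mul_assoc]
  rw [Matrix.mul_assoc, hWY, Matrix.mul_zero]

section Blocks

variable {A : Matrix n n 𝕜} {B : Matrix n m 𝕜} {C : Matrix m m 𝕜}

theorem PosSemidef.conjTranspose_mul_eq_zero_of_fromBlocks [DecidableEq n] [DecidableEq m]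
    (h : (fromBlocks A B Bᴴ C).PosSemidef) {X : Matrix n l 𝕜} (hX : A * X = 0) :
    Bᴴ * X = 0 := by
  have hY := h.mul_eq_zero_of_conjTranspose_mul_mul_eq_zero (Y := fromRows X (0 : Matrix m l 𝕜))
    (by simp [fromBlocks_mul_fromRows, conjTranspose_fromRows_eq_fromCols_conjTranspose,
      fromCols_mul_fromRows, Matrix.mul_assoc, hX])
  rw [fromBlocks_mul_fromRows, ← fromRows_zero] at hY
  simpa using (fromRows_inj hY).2

theorem PosSemidef.schur_of_fromBlocks [DecidableEq m] (h : (fromBlocks A B Bᴴ C).PosSemidef)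
    (X : Matrix n m 𝕜) : (Xᴴ * A * X + Xᴴ * B + Bᴴ * X + C).PosSemidef := by
  have key := h.conjTranspose_mul_mul_same (fromRows X 1)
  rw [Matrix.mul_assoc, fromBlocks_mul_fromRows, conjTranspose_fromRows_eq_fromCols_conjTranspose,
    fromCols_mul_fromRows] at key
  simpa only [conjTranspose_one, Matrix.mul_one, Matrix.one_mul, Matrix.mul_add,
    Matrix.mul_assoc, add_assoc] using key

end Blocks

variable [DecidableEq n]

theorem cfc_mul_cfc {A : Matrix n n 𝕜} (f g : ℝ → ℝ) :
    cfc f A * cfc g A = cfc (fun x => f x * g x) A :=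
  (cfc_mul f g A (A.finite_real_spectrum.continuousOn f)
    (A.finite_real_spectrum.continuousOn g)).symm

/-- `S = cfc √· A` and `T = cfc (√·)⁻¹ A`; since `0⁻¹ = 0`, `S * T` is the projection onto the
range of `A`. -/
theorem PosSemidef.exists_sqrt_and_pinv_sqrt {A : Matrix n n 𝕜} (hA : A.PosSemidef) :
    ∃ S T : Matrix n n 𝕜, Sᴴ = S ∧ Tᴴ = T ∧ S * T = T * S ∧ S * S = A ∧
      A * (S * T) = A ∧ T * T * A * (T * T) = T * T := by
  have hSS : cfc Real.sqrt A * cfc Real.sqrt A = A := by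
    rw [cfc_mul_cfc]
    conv_rhs => rw [← cfc_id' ℝ A hA.1.isSelfAdjoint]
    exact cfc_congr fun x hx => Real.mul_self_sqrt (spectrum_nonneg_of_nonneg hA.nonneg hx)
  set S := cfc Real.sqrt A with hS
  set T := cfc (fun x => (Real.sqrt x)⁻¹) A with hT
  refine ⟨S, T, IsSelfAdjoint.cfc.star_eq, IsSelfAdjoint.cfc.star_eq,
    (cfc_commute_cfc _ _ A).eq, hSS, ?_, ?_⟩
  all_goals
    rw [← hSS]
    simp only [hS, hT, cfc_mul_cfc]
    refine cfc_congr fun x _ => ?_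
    by_cases h : Real.sqrt x = 0
    · simp [h]
    · field_simp

theorem exists_mul_diagonal_mul_conjTranspose_of_range {A B S T : Matrix n n 𝕜}
    (hS : Sᴴ = S) (hT : Tᴴ = T) (hB : Bᴴ = B) (hSS : S * S = A)
    (hPB : S * T * B = B) (hBP : B * (T * S) = B) :
    ∃ (V : Matrix n n 𝕜) (t : n → ℝ), A = V * Vᴴ ∧
      B = V * diagonal (fun j => (t j : 𝕜)) * Vᴴ ∧
      V * diagonal (fun j => (t j : 𝕜) ^ 2) * Vᴴ = B * (T * T) * B := by
  set H := T * B * T with hHdef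
  have hH : H.IsHermitian := by
    simp only [IsHermitian, hHdef, conjTranspose_mul, hT, hB, Matrix.mul_assoc]
  set U : Matrix n n 𝕜 := ↑hH.eigenvectorUnitary
  set D := diagonal (fun j => (hH.eigenvalues j : 𝕜))
  have hHU : H = U * D * Uᴴ := hH.spectral_theorem
  have hUU : U * Uᴴ = 1 := Unitary.coe_mul_star_self hH.eigenvectorUnitary
  have hUU' : Uᴴ * U = 1 := Unitary.coe_star_mul_self hH.eigenvectorUnitary
  refine ⟨S * U, hH.eigenvalues, ?_, ?_, ?_⟩
  · rw [conjTranspose_mul, hS, Matrix.mul_assoc, ← Matrix.mul_assoc U, hUU, Matrix.one_mul, hSS]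
  · calc B = S * T * B * (T * S) := by rw [hPB, hBP]
      _ = S * (U * D * Uᴴ) * S := by rw [← hHU]; simp only [hHdef, Matrix.mul_assoc]
      _ = S * U * D * (S * U)ᴴ := by rw [conjTranspose_mul, hS]; simp only [Matrix.mul_assoc]
  · have hD : diagonal (fun j => (hH.eigenvalues j : 𝕜) ^ 2) = D * (Uᴴ * U) * D := by
      rw [hUU', Matrix.mul_one, diagonal_mul_diagonal]
      simp only [sq]
    calc S * U * diagonal (fun j => (hH.eigenvalues j : 𝕜) ^ 2) * (S * U)ᴴ
        = S * (U * D * Uᴴ) * (U * D * Uᴴ) * S := by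
          rw [hD, conjTranspose_mul, hS]
          simp only [Matrix.mul_assoc]
      _ = S * T * B * (T * T) * (B * (T * S)) := by
          rw [← hHU]
          simp only [hHdef, Matrix.mul_assoc]
      _ = B * (T * T) * B := by rw [hPB, hBP]

theorem PosSemidef.exists_factorization_of_fromBlocks {A B C : Matrix n n 𝕜}
    (h : (fromBlocks A B B C).PosSemidef) :
    ∃ (V W : Matrix n n 𝕜) (t : n → ℝ), A = V * Vᴴ ∧
      B = V * diagonal (fun j => (t j : 𝕜)) * Vᴴ ∧
      C = V * diagonal (fun j => (t j : 𝕜) ^ 2) * Vᴴ + W * Wᴴ := by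
  obtain ⟨-, hB, -, -⟩ := isHermitian_fromBlocks_iff.mp h.1
  have h' : (fromBlocks A B Bᴴ C).PosSemidef := by rwa [hB]
  have hA : A.PosSemidef := h.submatrix Sum.inl
  obtain ⟨S, T, hS, hT, hST, hSS, hAP, hTAT⟩ := hA.exists_sqrt_and_pinv_sqrt
  have hBP : B * (T * S) = B := by
    have h0 := h'.conjTranspose_mul_eq_zero_of_fromBlocks
      (X := 1 - S * T) (by rw [Matrix.mul_sub, Matrix.mul_one, hAP, sub_self])
    rw [hB, Matrix.mul_sub, Matrix.mul_one, sub_eq_zero, hST] at h0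
    exact h0.symm
  have hPB : S * T * B = B := by
    simpa only [conjTranspose_mul, hS, hT, hB, Matrix.mul_assoc] using congrArg (·ᴴ) hBP
  obtain ⟨V, t, hAV, hBV, hCV⟩ := exists_mul_diagonal_mul_conjTranspose_of_range hS hT hB hSS hPB hBP
  obtain ⟨W, hW⟩ := (h'.schur_of_fromBlocks (-(T * T * B))).exists_eq_mul_conjTranspose
  have hX : (-(T * T * B))ᴴ = -(B * (T * T)) := by
    simp only [conjTranspose_neg, conjTranspose_mul, hT, hB, Matrix.mul_assoc]
  have hquad : -(B * (T * T)) * A * -(T * T * B) = B * (T * T) * B := by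
    calc -(B * (T * T)) * A * -(T * T * B) = B * (T * T * A * (T * T)) * B := by noncomm_ring
      _ = B * (T * T) * B := by rw [hTAT]
  rw [hX, hquad, hB] at hW
  refine ⟨V, W, t, hAV, hBV, ?_⟩
  rw [hCV, ← hW]
  noncomm_ring

end Matrix

open Matrix

theorem exists_product_decomposition_of_partialTranspose_eq {n : Type*} [Fintype n]
    [DecidableEq n] {ρ : Matrix (Fin 2 × n) (Fin 2 × n) ℂ} (hρ : ρ.PosSemidef)
    (hPT : ∀ (i j : Fin 2) (k l : n), ρ (i, k) (j, l) = ρ (j, k) (i, l)) :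
    ∃ (x : n ⊕ n → Fin 2 → ℂ) (y : n ⊕ n → n → ℂ), ∀ (i j : Fin 2) (k l : n),
      ρ (i, k) (j, l) = ∑ p, (x p i * y p k) * star (x p j * y p l) := by
  let e : n ⊕ n → Fin 2 × n := Sum.elim (fun k => (0, k)) (fun k => (1, k))
  have hblocks : ρ.submatrix e e = fromBlocks (ρ.submatrix (0, ·) (0, ·))
      (ρ.submatrix (0, ·) (1, ·)) (ρ.submatrix (0, ·) (1, ·)) (ρ.submatrix (1, ·) (1, ·)) := by
    ext (k | k) (l | l) <;> simp [e, hPT 1 0]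
  obtain ⟨V, W, t, hA, hB, hC⟩ := (hblocks ▸ hρ.submatrix e).exists_factorization_of_fromBlocks
  refine ⟨Sum.elim (fun j => ![1, (t j : ℂ)]) (fun _ => ![0, 1]),
    Sum.elim (fun j k => V k j) (fun j k => W k j), fun i j k l => ?_⟩
  simp only [← Matrix.ext_iff, submatrix_apply] at hA hB hC
  fin_cases i <;> fin_cases j <;>
    simp [hA, hB, hC, hPT 1 0, mul_apply, diagonal_apply, Fintype.sum_sum_type, mul_comm,
      mul_left_comm, mul_assoc, add_comm, sq]

theorem exists_fin_family_ne_zero {ι α β R : Type*} [Fintype ι] [Semiring R] [StarRing R]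
    (x : ι → α → R) (y : ι → β → R) :
    ∃ (m : ℕ) (x' : Fin m → α → R) (y' : Fin m → β → R), (∀ t, x' t ≠ 0) ∧ (∀ t, y' t ≠ 0) ∧
      ∀ i j k l, ∑ p, (x p i * y p k) * star (x p j * y p l) =
        ∑ t, (x' t i * y' t k) * star (x' t j * y' t l) := by
  classical
  let s := Finset.univ.filter fun p => x p ≠ 0 ∧ y p ≠ 0
  have hs (t : Fin s.card) := (Finset.mem_filter.mp (s.equivFin.symm t).2).2
  refine ⟨s.card, fun t => x (s.equivFin.symm t), fun t => y (s.equivFin.symm t),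
    fun t => (hs t).1, fun t => (hs t).2, fun i j k l => ?_⟩
  rw [Equiv.sum_comp s.equivFin.symm (fun p : s => (x p i * y p k) * star (x p j * y p l)),
    Finset.sum_coe_sort s fun p => (x p i * y p k) * star (x p j * y p l),
    Finset.sum_filter_of_ne]
  intro p _ hp
  contrapose! hp
  by_cases hx : x p = 0
  · simp [hx]
  · simp [hp hx]

theorem stmt_3_general {N : ℕ} (ρ : Matrix (Fin 2 × Fin N) (Fin 2 × Fin N) ℂ)
    (hpsd : ρ.PosSemidef)
    (hPT : ∀ (i j : Fin 2) (k l : Fin N), ρ (i, k) (j, l) = ρ (j, k) (i, l)) :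
    ∃ (m : ℕ) (x : Fin m → Fin 2 → ℂ) (y : Fin m → Fin N → ℂ),
      (∀ t, x t ≠ 0) ∧ (∀ t, y t ≠ 0) ∧
      ∀ (i j : Fin 2) (k l : Fin N),
        ρ (i, k) (j, l) = ∑ t, (x t i * y t k) * star (x t j * y t l) := by
  obtain ⟨x, y, hρ⟩ := exists_product_decomposition_of_partialTranspose_eq hpsd hPT
  obtain ⟨m, x', y', hx', hy', hsum⟩ := exists_fin_family_ne_zero x y
  exact ⟨m, x', y', hx', hy', fun i j k l => (hρ i j k l).trans (hsum i j k l)⟩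

/-- Every `2 ⊗ N` state invariant under partial transpose of the first factor is separable. -/
theorem stmt_3 {N : ℕ} (ρ : Matrix (Fin 2 × Fin N) (Fin 2 × Fin N) ℂ)
    (hpsd : ρ.PosSemidef) (htr : ρ.trace = 1)
    (hPT : ∀ (i j : Fin 2) (k l : Fin N), ρ (i, k) (j, l) = ρ (j, k) (i, l)) :
    ∃ (m : ℕ) (x : Fin m → Fin 2 → ℂ) (y : Fin m → Fin N → ℂ),
      (∀ t, x t ≠ 0) ∧ (∀ t, y t ≠ 0) ∧
      ∀ (i j : Fin 2) (k l : Fin N),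
        ρ (i, k) (j, l) = ∑ t, (x t i * y t k) * star (x t j * y t l) :=
  stmt_3_general ρ hpsd hPT
end

section
/- Any subspace of the bipartite symmetric subspace of dimension at least N(N−1)/2 + 1 contains a product vector: if V is a complex linear subspace of the space of functions Fin N × Fin N → ℂ such that every w ∈ V satisfies w(i,j) = w(j,i) for all i,j, and dim V ≥ N(N−1)/2 + 1, then there exist nonzero vectors x, y ∈ ℂ^N with the vector (i,j) ↦ x(i)y(j) belonging to V. -/
/-!
`V` lies in the symmetric subspace `S`, of dimension `N(N+1)/2`, so it has codimension `r < N`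
in `S` and is cut out of `S` by `r` linear forms `φ j`. Hence `x ⊗ x ∈ V` as soon as `x` is a
common zero of the `r` quadrics `x ↦ φ j (x ⊗ x)` in `N` variables, which all vanish at `0`.
Over an algebraically closed field, fewer than `N` polynomials in `N` variables with a common
zero `a` have a second one: otherwise the maximal ideal of `a` would be minimal over an ideal
with fewer than `N` generators, so by Krull's height theorem its height would be less than `N`;
but translations act transitively on the maximal ideals (Nullstellensatz), so they all have the
same height, namely the Krull dimension `N`.
-/

open MvPolynomial Module

namespace MvPolynomial

variable {R : Type*} [CommRing R] {σ : Type*}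

noncomputable def translate (c : σ → R) : MvPolynomial σ R ≃ₐ[R] MvPolynomial σ R :=
  AlgEquiv.ofAlgHom (aeval fun i => X i + C (c i)) (aeval fun i => X i - C (c i))
    (by ext; simp) (by ext; simp)

@[simp] lemma eval_translate (c x : σ → R) (p : MvPolynomial σ R) :
    eval x (translate c p) = eval (x + c) p := by
  induction p using MvPolynomial.induction_on with
  | C a => simp [translate]
  | add p q hp hq => simp_all
  | mul_X p i hp => simp_all [translate]

variable {K : Type*} [Field K]

lemma comap_translate_vanishingIdeal_singleton (c x : σ → K) :
    (vanishingIdeal K {x}).comap (translate c) = vanishingIdeal K {x + c} := by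
  ext p
  simp

lemma height_vanishingIdeal_singleton_eq (x y : σ → K) :
    (vanishingIdeal K {x}).height = (vanishingIdeal K {y}).height := by
  have h := comap_translate_vanishingIdeal_singleton (y - x) x
  rw [add_sub_cancel] at h
  rw [← h]
  exact (RingEquiv.height_comap (translate (y - x)).toRingEquiv _).symm

variable [IsAlgClosed K] [Finite σ]

lemma natCard_le_height_vanishingIdeal_singleton (x : σ → K) :
    (Nat.card σ : ℕ∞) ≤ (vanishingIdeal K {x}).height := by
  have hdim : ringKrullDim (MvPolynomial σ K) = Nat.card σ := by
    simp [ringKrullDim_eq_zero_of_field]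
  have hle : ringKrullDim (MvPolynomial σ K) ≤ (vanishingIdeal K {x}).height := by
    refine (ringKrullDim_le_iff_isMaximal_height_le _).mpr fun m hm => ?_
    obtain ⟨y, rfl⟩ := eq_vanishingIdeal_singleton_of_isMaximal K hm
    rw [height_vanishingIdeal_singleton_eq y x]
  exact_mod_cast hdim ▸ hle

theorem exists_ne_forall_eval_eq_zero (s : Finset (MvPolynomial σ K)) (hs : s.card < Nat.card σ)
    (x : σ → K) (hx : ∀ p ∈ s, eval x p = 0) : ∃ y ≠ x, ∀ p ∈ s, eval y p = 0 := by
  by_contra! h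
  have hzero : zeroLocus K (Ideal.span (s : Set (MvPolynomial σ K))) = {x} := by
    ext y
    simp only [zeroLocus_span, Set.mem_ofPred_eq, Finset.mem_coe, Set.mem_singleton_iff]
    exact ⟨fun hy => by_contra fun hne => (h y hne).elim fun p ⟨hp, hy'⟩ => hy' (hy p hp),
      fun hy => hy ▸ hx⟩
  have hmin : vanishingIdeal K {x} ∈ (Ideal.span (s : Set (MvPolynomial σ K))).minimalPrimes := by
    rw [← Ideal.radical_minimalPrimes, ← vanishingIdeal_zeroLocus_eq_radical (K := K), hzero,
      Ideal.minimalPrimes_eq_subsingleton_self]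
    rfl
  have := (natCard_le_height_vanishingIdeal_singleton x).trans
    (Ideal.height_le_card_of_mem_minimalPrimes_span_finset hmin)
  exact absurd this (by exact_mod_cast hs.not_ge)

end MvPolynomial

section LinearAlgebra

variable {K E : Type*} [Field K] [AddCommGroup E] [Module K E]

theorem Submodule.exists_dual_forall_mem_of_le {V S : Submodule K E} [FiniteDimensional K S]
    (hVS : V ≤ S) :
    ∃ φ : Fin (finrank K S - finrank K V) → Dual K E, ∀ w ∈ S, (∀ j, φ j w = 0) → w ∈ V := by
  set V' := V.comap S.subtype
  have hrank : finrank K (S ⧸ V') = finrank K S - finrank K V := by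
    rw [Submodule.finrank_quotient, (Submodule.comapSubtypeEquivOfLe hVS).finrank_eq]
  let b := (finBasis K (S ⧸ V')).reindex (finCongr hrank)
  choose φ hφ using fun j => LinearMap.exists_extend (b.coord j ∘ₗ V'.mkQ)
  refine ⟨φ, fun w hw hw0 => ?_⟩
  have hq : V'.mkQ ⟨w, hw⟩ = 0 := b.forall_coord_eq_zero_iff.mp fun j => by
    rw [← hw0 j, ← LinearMap.comp_apply, ← hφ j]
    rfl
  simpa [V'] using hq

end LinearAlgebra

section Symmetric

variable (K ι : Type*) [Field K]

def symmetricSubspace : Submodule K (ι × ι → K) where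
  carrier := {w | ∀ i j, w (i, j) = w (j, i)}
  add_mem' ha hb i j := by simp only [Pi.add_apply, ha i j, hb i j]
  zero_mem' _ _ := rfl
  smul_mem' c w hw i j := by simp only [Pi.smul_apply, hw i j]

variable {K ι}

lemma mul_mem_symmetricSubspace (x : ι → K) :
    (fun p : ι × ι => x p.1 * x p.2) ∈ symmetricSubspace K ι :=
  fun _ _ => mul_comm _ _

lemma symmetricSubspace_le_range_funLeft :
    symmetricSubspace K ι ≤
      LinearMap.range (LinearMap.funLeft K K (fun p : ι × ι => s(p.1, p.2))) :=
  fun w hw => ⟨Sym2.lift ⟨fun i j => w (i, j), hw⟩, funext fun _ => rfl⟩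

variable (K ι) [Fintype ι]

lemma finrank_symmetricSubspace_le :
    finrank K (symmetricSubspace K ι) ≤ (Fintype.card ι + 1).choose 2 := by
  calc finrank K (symmetricSubspace K ι)
      _ ≤ finrank K (LinearMap.range (LinearMap.funLeft K K (fun p : ι × ι => s(p.1, p.2)))) :=
        Submodule.finrank_mono symmetricSubspace_le_range_funLeft
      _ ≤ finrank K (Sym2 ι → K) := LinearMap.finrank_range_le _
      _ = (Fintype.card ι + 1).choose 2 := by simp [Sym2.card]

variable {K ι}

noncomputable def quadraticPolynomial (φ : Dual K (ι × ι → K)) : MvPolynomial ι K :=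
  ∑ p : ι × ι, C (φ (Pi.basisFun K (ι × ι) p)) * X p.1 * X p.2

lemma eval_quadraticPolynomial (φ : Dual K (ι × ι → K)) (x : ι → K) :
    eval x (quadraticPolynomial φ) = φ (fun p => x p.1 * x p.2) := by
  conv_rhs => rw [← (Pi.basisFun K (ι × ι)).sum_repr (fun p => x p.1 * x p.2)]
  simp only [quadraticPolynomial, map_sum, map_mul, eval_C, eval_X, Pi.basisFun_repr, map_smul,
    smul_eq_mul]
  exact Finset.sum_congr rfl fun _ _ => by ring

end Symmetric

/-- Any subspace of the bipartite symmetric subspace of dimension at least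
`N(N−1)/2 + 1` contains a (nonzero) product vector. -/
theorem stmt_11 {N : ℕ} (V : Submodule ℂ ((Fin N × Fin N) → ℂ))
    (hsym : ∀ w ∈ V, ∀ i j : Fin N, w (i, j) = w (j, i))
    (hdim : N * (N - 1) / 2 + 1 ≤ Module.finrank ℂ V) :
    ∃ (x y : Fin N → ℂ), x ≠ 0 ∧ y ≠ 0 ∧ (fun p : Fin N × Fin N => x p.1 * y p.2) ∈ V := by
  have hVS : V ≤ symmetricSubspace ℂ (Fin N) := hsym
  obtain ⟨φ, hφ⟩ := Submodule.exists_dual_forall_mem_of_le hVS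
  have hcodim : finrank ℂ (symmetricSubspace ℂ (Fin N)) - finrank ℂ V < N := by
    have hS := finrank_symmetricSubspace_le ℂ (Fin N)
    rw [Fintype.card_fin, Nat.choose_succ_succ', Nat.choose_one_right, Nat.choose_two_right] at hS
    have := Submodule.finrank_mono hVS
    omega
  set s := Finset.univ.image fun j => quadraticPolynomial (φ j)
  have hs : s.card < Nat.card (Fin N) := by
    simpa using Finset.card_image_le.trans_lt (by simpa using hcodim)
  have hs0 : ∀ p ∈ s, eval 0 p = 0 := by
    simp only [s, Finset.forall_mem_image]
    intro j _
    rw [eval_quadraticPolynomial]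
    exact (congrArg (φ j) (funext fun _ => mul_zero _)).trans (map_zero _)
  obtain ⟨x, hx0, hx⟩ := exists_ne_forall_eval_eq_zero s hs 0 hs0
  refine ⟨x, x, hx0, hx0, hφ _ (mul_mem_symmetricSubspace x) fun j => ?_⟩
  rw [← eval_quadraticPolynomial]
  exact hx _ (Finset.mem_image_of_mem _ (Finset.mem_univ j))
end

section
/- Takagi decomposition of symmetric bipartite pure states: (i) every nonzero vector ψ : Fin N × Fin N → ℂ with ψ(i,j) = ψ(j,i) for all i,j can be written as ψ(p,q) = ∑_t a_t(p)·a_t(q) for a finite family of vectors a_t ∈ ℂ^N that are pairwise orthogonal with respect to the standard Hermitian inner product; (ii) if moreover ψ is real valued, then ψ(p,q) = ∑_t ε_t·a_t(p)·a_t(q) where each ε_t ∈ {+1, −1} and the a_t are pairwise orthogonal real vectors in ℝ^N. -/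
/-!
Identify `ℂⁿ` with `ℝⁿ ⊕ ℝⁿ`. For symmetric `S`, the conjugate-linear map `z ↦ S z̄` becomes a
real symmetric matrix `M` that anticommutes with the complex structure `J`. Hence `x ⬝ J y = 0`
for eigenvectors `x, y` of `M` with eigenvalues of positive sum; together with `x ⬝ y = 0` this
makes the complex vectors `z` of orthonormal eigenvectors for positive eigenvalues
Hermitian-orthogonal. Since `|M|` commutes with `J`, it has no conjugate-linear part, so `S` is
already the conjugate-linear part of the positive part `(M + |M|) / 2 = ∑_{λ > 0} λ x xᵀ`, which
is `∑_{λ > 0} λ z zᵀ`.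

For real `ψ` the spectral theorem suffices: `a_t = √|λ_t| e_t` and `ε_t = sign λ_t`.
-/

open Matrix Complex Sum

section

variable {A : Type*} [Ring A] [StarRing A] [Algebra ℝ A] [TopologicalSpace A]
  [ContinuousFunctionalCalculus ℝ A IsSelfAdjoint]

lemma cfc_max_zero {a : A} (ha : IsSelfAdjoint a) :
    cfc (fun x : ℝ => max x 0) a = (1 / 2 : ℝ) • (a + cfc (|·| : ℝ → ℝ) a) := by
  have hmax : (fun x : ℝ => max x 0) = fun x => 1 / 2 * (x + |x|) := by
    ext x
    rcases le_total 0 x with hx | hx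
    · rw [max_eq_left hx, abs_of_nonneg hx]; ring
    · rw [max_eq_right hx, abs_of_nonpos hx]; ring
  rw [hmax, cfc_const_mul .., cfc_add .., cfc_id' ..]

end

namespace Matrix

variable {ι : Type*}

/-- The real matrix of the conjugate-linear map `z ↦ S * conj z` on `ℂⁿ ≅ ℝⁿ ⊕ ℝⁿ`. -/
def conjLinearRealForm (S : Matrix ι ι ℂ) : Matrix (ι ⊕ ι) (ι ⊕ ι) ℝ :=
  fromBlocks (S.map re) (S.map im) (S.map im) (-S.map re)

def realToComplex (x : ι ⊕ ι → ℝ) : ι → ℂ :=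
  fun p => x (inl p) + x (inr p) * I

/-- Twice the matrix `S` of the conjugate-linear part `z ↦ S * conj z` of a real-linear map
on `ℂⁿ ≅ ℝⁿ ⊕ ℝⁿ`. -/
def conjLinearPart : Matrix (ι ⊕ ι) (ι ⊕ ι) ℝ →ₗ[ℝ] Matrix ι ι ℂ where
  toFun B := of fun p q => (B (inl p) (inl q) - B (inr p) (inr q) : ℝ) +
    (B (inl p) (inr q) + B (inr p) (inl q) : ℝ) * I
  map_add' B C := by
    ext p q
    simp only [add_apply, of_apply]
    push_cast
    ring
  map_smul' c B := by
    ext p q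
    simp only [smul_apply, of_apply, smul_eq_mul, RingHom.id_apply, Complex.real_smul]
    push_cast
    ring

lemma IsSymm.conjLinearRealForm_isHermitian {S : Matrix ι ι ℂ} (hS : S.IsSymm) :
    (conjLinearRealForm S).IsHermitian := by
  have hre : (S.map re)ᴴ = S.map re := isHermitian_iff_isSymm.2 (hS.map re)
  have him : (S.map im)ᴴ = S.map im := isHermitian_iff_isSymm.2 (hS.map im)
  rw [IsHermitian, conjLinearRealForm, fromBlocks_conjTranspose, hre, him, conjTranspose_neg, hre]

lemma conjLinearPart_conjLinearRealForm (S : Matrix ι ι ℂ) :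
    conjLinearPart (conjLinearRealForm S) = (2 : ℝ) • S := by
  ext p q
  apply Complex.ext <;> simp [conjLinearPart, conjLinearRealForm] <;> ring

lemma conjLinearPart_vecMulVec_self (x : ι ⊕ ι → ℝ) :
    conjLinearPart (vecMulVec x x) = vecMulVec (realToComplex x) (realToComplex x) := by
  ext p q
  apply Complex.ext <;> simp [conjLinearPart, realToComplex, vecMulVec_apply]

variable [Fintype ι]

lemma dotProduct_mulVec_eq_zero_of_anticommute {A J : Matrix ι ι ℝ} (hA : A.IsHermitian)
    (hJ : J * A = -(A * J)) {x y : ι → ℝ} {μ ν : ℝ} (hx : A *ᵥ x = μ • x)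
    (hy : A *ᵥ y = ν • y) (hμν : μ + ν ≠ 0) : x ⬝ᵥ (J *ᵥ y) = 0 := by
  have hJA : x ⬝ᵥ ((J * A) *ᵥ y) = ν * (x ⬝ᵥ (J *ᵥ y)) := by
    rw [← mulVec_mulVec, hy, mulVec_smul, dotProduct_smul, smul_eq_mul]
  have hAJ : x ⬝ᵥ ((A * J) *ᵥ y) = μ * (x ⬝ᵥ (J *ᵥ y)) := by
    rw [← mulVec_mulVec, dotProduct_mulVec, ← mulVec_transpose,
      ← conjTranspose_eq_transpose_of_trivial, hA.eq, hx, smul_dotProduct, smul_eq_mul]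
  rw [hJ, neg_mulVec, dotProduct_neg, hAJ, neg_eq_iff_add_eq_zero, ← add_mul] at hJA
  exact (mul_eq_zero.1 hJA).resolve_left hμν

variable [DecidableEq ι]

lemma IsHermitian.cfc_eq_sum_smul_vecMulVec {A : Matrix ι ι ℝ} (hA : A.IsHermitian)
    (f : ℝ → ℝ) :
    cfc f A = ∑ k, f (hA.eigenvalues k) •
      vecMulVec ⇑(hA.eigenvectorBasis k) ⇑(hA.eigenvectorBasis k) := by
  ext i j
  rw [hA.cfc_eq, IsHermitian.cfc, Unitary.conjStarAlgAut_apply, mul_apply]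
  simp [mul_diagonal, vecMulVec_apply, Matrix.sum_apply, mul_comm, mul_assoc]

lemma IsHermitian.dotProduct_eigenvectorBasis {A : Matrix ι ι ℝ} (hA : A.IsHermitian)
    {s t : ι} (hst : s ≠ t) :
    ⇑(hA.eigenvectorBasis s) ⬝ᵥ ⇑(hA.eigenvectorBasis t) = 0 := by
  simpa [EuclideanSpace.inner_eq_star_dotProduct, dotProduct_comm] using
    hA.eigenvectorBasis.orthonormal.2 hst

lemma IsHermitian.exists_eq_sum_sign_smul_vecMulVec_self {A : Matrix ι ι ℝ}
    (hA : A.IsHermitian) :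
    ∃ (ε : ι → ℝ) (a : ι → ι → ℝ), (∀ t, ε t = 1 ∨ ε t = -1) ∧
      Pairwise (fun s t => a s ⬝ᵥ a t = 0) ∧ A = ∑ t, ε t • vecMulVec (a t) (a t) := by
  refine ⟨fun t => if 0 ≤ hA.eigenvalues t then 1 else -1,
    fun t => √|hA.eigenvalues t| • ⇑(hA.eigenvectorBasis t), fun t => ?_, fun s t hst => ?_, ?_⟩
  · dsimp only
    split_ifs <;> simp
  · simp [smul_dotProduct, dotProduct_smul, hA.dotProduct_eigenvectorBasis hst]
  · have hA' : IsSelfAdjoint A := hA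
    conv_lhs => rw [← cfc_id' ℝ A, hA.cfc_eq_sum_smul_vecMulVec]
    refine Finset.sum_congr rfl fun t _ => ?_
    rw [smul_vecMulVec, vecMulVec_smul, smul_smul, smul_smul, mul_assoc,
      Real.mul_self_sqrt (abs_nonneg _)]
    dsimp only
    split_ifs with h
    · rw [abs_of_nonneg h, one_mul]
    · rw [abs_of_neg (not_le.1 h), neg_one_mul, neg_neg]

lemma commute_cfc_abs_of_anticommute {A J : Matrix ι ι ℝ} (hA : A.IsHermitian)
    (hJ : J * A = -(A * J)) : Commute (cfc (|·| : ℝ → ℝ) A) J := by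
  have hJ' : A * J = -(J * A) := by rw [hJ, neg_neg]
  have hsq : Commute (A ^ 2) J :=
    calc A ^ 2 * J = A * (A * J) := by rw [sq, mul_assoc]
      _ = -(A * J * A) := by nth_rw 1 [hJ']; noncomm_ring
      _ = J * A ^ 2 := by rw [hJ']; noncomm_ring
  have habs : cfc (|·| : ℝ → ℝ) A = cfc Real.sqrt (A ^ 2) := by
    have hA' : IsSelfAdjoint A := hA
    rw [← cfc_pow_id (R := ℝ) A 2, ← cfc_comp Real.sqrt (fun x : ℝ => x ^ 2) A]
    simp [Function.comp_def, Real.sqrt_sq_eq_abs]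
  rw [habs]
  exact hsq.cfc_real _

/-- Multiplication by `I` on `ℂⁿ ≅ ℝⁿ ⊕ ℝⁿ`. -/
def complexStructure : Matrix (ι ⊕ ι) (ι ⊕ ι) ℝ :=
  fromBlocks 0 (-1) 1 0

lemma complexStructure_mul_conjLinearRealForm (S : Matrix ι ι ℂ) :
    complexStructure * conjLinearRealForm S = -(conjLinearRealForm S * complexStructure) := by
  simp [complexStructure, conjLinearRealForm, fromBlocks_multiply, fromBlocks_neg]

lemma conjLinearPart_eq_zero_of_commute {B : Matrix (ι ⊕ ι) (ι ⊕ ι) ℝ}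
    (hB : Commute B complexStructure) : conjLinearPart B = 0 := by
  ext p q
  have h₁ := congrFun₂ hB.eq (inl p) (inr q)
  have h₂ := congrFun₂ hB.eq (inl p) (inl q)
  simp [complexStructure, mul_apply, Fintype.sum_sum_type, one_apply] at h₁ h₂
  simp only [conjLinearPart, LinearMap.coe_mk, AddHom.coe_mk, of_apply, zero_apply, h₁, h₂]
  push_cast
  ring

lemma star_realToComplex_dotProduct (x y : ι ⊕ ι → ℝ) :
    star (realToComplex x) ⬝ᵥ realToComplex y =
      (x ⬝ᵥ y : ℝ) - (x ⬝ᵥ (complexStructure *ᵥ y) : ℝ) * I := by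
  apply Complex.ext <;>
    simp [dotProduct, Fintype.sum_sum_type, realToComplex, complexStructure, fromBlocks_mulVec,
      Complex.re_sum, Complex.im_sum, Finset.sum_add_distrib, neg_mulVec, one_mulVec]
  ring

lemma IsSymm.exists_eq_sum_vecMulVec_self {S : Matrix ι ι ℂ} (hS : S.IsSymm) :
    ∃ a : ι ⊕ ι → ι → ℂ, Pairwise (fun s t => star (a s) ⬝ᵥ a t = 0) ∧
      S = ∑ k, vecMulVec (a k) (a k) := by
  set M := conjLinearRealForm S
  have hM : M.IsHermitian := hS.conjLinearRealForm_isHermitian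
  have hJ : complexStructure * M = -(M * complexStructure) :=
    complexStructure_mul_conjLinearRealForm S
  set e := fun k => ⇑(hM.eigenvectorBasis k)
  set c := fun k => √(max (hM.eigenvalues k) 0)
  refine ⟨fun k => realToComplex (c k • e k), fun s t hst => ?_, ?_⟩
  · have hcJ : c s = 0 ∨ c t = 0 ∨ e s ⬝ᵥ (complexStructure *ᵥ e t) = 0 := by
      rcases le_or_gt (hM.eigenvalues s) 0 with hs | hs
      · simp [c, hs]
      rcases le_or_gt (hM.eigenvalues t) 0 with ht | ht
      · simp [c, ht]
      exact .inr <| .inr <| dotProduct_mulVec_eq_zero_of_anticommute hM hJ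
        (hM.mulVec_eigenvectorBasis s) (hM.mulVec_eigenvectorBasis t) (by positivity)
    have he : e s ⬝ᵥ e t = 0 := hM.dotProduct_eigenvectorBasis hst
    simp only [star_realToComplex_dotProduct, smul_dotProduct, dotProduct_smul, mulVec_smul,
      smul_eq_mul, he]
    rcases hcJ with h | h | h <;> simp [h]
  · calc S = (1 / 2 : ℝ) • conjLinearPart (M + cfc (|·| : ℝ → ℝ) M) := by
          rw [map_add, conjLinearPart_conjLinearRealForm,
            conjLinearPart_eq_zero_of_commute (commute_cfc_abs_of_anticommute hM hJ), add_zero,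
            smul_smul]
          norm_num
      _ = conjLinearPart (cfc (fun x : ℝ => max x 0) M) := by
          rw [cfc_max_zero hM.isSelfAdjoint, map_smul]
      _ = ∑ k, conjLinearPart (vecMulVec (c k • e k) (c k • e k)) := by
          rw [hM.cfc_eq_sum_smul_vecMulVec, map_sum]
          refine Finset.sum_congr rfl fun k _ => ?_
          rw [smul_vecMulVec, vecMulVec_smul, smul_smul, Real.mul_self_sqrt (le_max_right _ _)]
      _ = _ := by simp only [conjLinearPart_vecMulVec_self]

end Matrix

theorem stmt_12_general {N : ℕ} (ψ : Fin N × Fin N → ℂ)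
    (hsym : ∀ i j : Fin N, ψ (i, j) = ψ (j, i)) :
    (∃ (m : ℕ) (a : Fin m → Fin N → ℂ),
      (∀ s t, s ≠ t → ∑ p, star (a s p) * a t p = 0) ∧
      ∀ p q : Fin N, ψ (p, q) = ∑ t, a t p * a t q) ∧
    ((∀ p, (ψ p).im = 0) →
      ∃ (m : ℕ) (ε : Fin m → ℝ) (a : Fin m → Fin N → ℝ),
        (∀ t, ε t = 1 ∨ ε t = -1) ∧
        (∀ s t, s ≠ t → ∑ p, a s p * a t p = 0) ∧
        ∀ p q : Fin N, ψ (p, q) = ((∑ t, ε t * (a t p * a t q) : ℝ) : ℂ)) := by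
  set S : Matrix (Fin N) (Fin N) ℂ := of fun p q => ψ (p, q)
  have hS : S.IsSymm := IsSymm.ext fun p q => hsym q p
  refine ⟨?_, fun hreal => ?_⟩
  · obtain ⟨a, horth, hsum⟩ := hS.exists_eq_sum_vecMulVec_self
    let σ := Fintype.equivFin (Fin N ⊕ Fin N)
    refine ⟨_, a ∘ σ.symm, fun s t hst => horth (σ.symm.injective.ne hst), fun p q => ?_⟩
    rw [Function.comp_def, σ.symm.sum_comp (fun k => a k p * a k q)]
    simpa [S, Matrix.sum_apply, vecMulVec_apply] using congrFun₂ hsum p q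
  · obtain ⟨ε, a, hε, horth, hsum⟩ :=
      (isHermitian_iff_isSymm.2 (hS.map re)).exists_eq_sum_sign_smul_vecMulVec_self
    refine ⟨N, ε, a, hε, fun s t hst => horth hst, fun p q => Complex.ext ?_ ?_⟩
    · simpa [S, Matrix.sum_apply, vecMulVec_apply] using congrFun₂ hsum p q
    · simpa using hreal (p, q)

/-- Takagi decomposition of symmetric bipartite pure states: (i) every nonzero symmetric
`ψ` is a sum `ψ(p,q) = ∑ t, a_t(p)·a_t(q)` with pairwise orthogonal `a_t ∈ ℂ^N`;
(ii) if moreover `ψ` is real valued then `ψ(p,q) = ∑ t, ε_t·a_t(p)·a_t(q)` with signs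
`ε_t ∈ {±1}` and pairwise orthogonal real vectors `a_t ∈ ℝ^N`. -/
theorem stmt_12 {N : ℕ} (ψ : Fin N × Fin N → ℂ) (hne : ψ ≠ 0)
    (hsym : ∀ i j : Fin N, ψ (i, j) = ψ (j, i)) :
    (∃ (m : ℕ) (a : Fin m → Fin N → ℂ),
      (∀ s t, s ≠ t → ∑ p, star (a s p) * a t p = 0) ∧
      ∀ p q : Fin N, ψ (p, q) = ∑ t, a t p * a t q) ∧
    ((∀ p, (ψ p).im = 0) →
      ∃ (m : ℕ) (ε : Fin m → ℝ) (a : Fin m → Fin N → ℝ),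
        (∀ t, ε t = 1 ∨ ε t = -1) ∧
        (∀ s t, s ≠ t → ∑ p, a s p * a t p = 0) ∧
        ∀ p q : Fin N, ψ (p, q) = ((∑ t, ε t * (a t p * a t q) : ℝ) : ℂ)) :=
  stmt_12_general ψ hsym
end

section
/- The range of a completely symmetric state is contained in the cyclically invariant subspace: if ρ is a CS state on (ℂ^N)^{⊗d} and c : Fin d → Fin d is the cyclic permutation k ↦ k+1 (mod d), then every vector w in the column space of ρ satisfies w(I ∘ c) = w(I) for every index I : Fin d → Fin N (and hence w is invariant under all powers of c). -/
open scoped ComplexOrder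

theorem IsCS.apply_comp_perm_left {N d : ℕ} {ρ : Matrix (Fin d → Fin N) (Fin d → Fin N) ℂ}
    (hCS : IsCS ρ) (σ : Equiv.Perm (Fin d)) (I J : Fin d → Fin N) :
    ρ (I ∘ σ) J = ρ I J := by
  simpa [Function.comp_def] using hCS (Equiv.sumCongr σ (Equiv.refl _)) I J

theorem stmt_14_general {N d : ℕ} (ρ : Matrix (Fin d → Fin N) (Fin d → Fin N) ℂ)
    (hCS : IsCS ρ) :
    ∀ (u : (Fin d → Fin N) → ℂ) (I : Fin d → Fin N),
      ρ.mulVec u (I ∘ finRotate d) = ρ.mulVec u I :=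
  fun u I => congrArg (· ⬝ᵥ u) (funext (hCS.apply_comp_perm_left (finRotate d) I))

/-- The range of a CS state is contained in the cyclically invariant subspace, where
`finRotate d` is the cyclic permutation `k ↦ k + 1 (mod d)`. -/
theorem stmt_14 {N d : ℕ} (ρ : Matrix (Fin d → Fin N) (Fin d → Fin N) ℂ)
    (hpsd : ρ.PosSemidef) (htr : ρ.trace = 1) (hCS : IsCS ρ) :
    ∀ (u : (Fin d → Fin N) → ℂ) (I : Fin d → Fin N),
      ρ.mulVec u (I ∘ finRotate d) = ρ.mulVec u I :=
  stmt_14_general ρ hCS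
end

section
/- Partial trace preserves complete symmetry: if ρ is a CS state on (ℂ^N)^{⊗d} with d ≥ 2, then the reduced state σ on (ℂ^N)^{⊗(d−1)} obtained by tracing out the last party, defined entrywise by σ(I',J') = ∑_{k ∈ Fin N} ρ((I',k),(J',k)) where (I',k) is the index extending I' : Fin (d−1) → Fin N by value k in the last slot, is again a CS state. -/
open scoped ComplexOrder
open Matrix

namespace StmtAux

variable {d : ℕ}

def F (π : Equiv.Perm (Fin (d+1) ⊕ Fin (d+1))) :
    Fin (d+2) ⊕ Fin (d+2) → Fin (d+2) ⊕ Fin (d+2)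
  | Sum.inl i => Fin.lastCases (Sum.inl (Fin.last (d+1)))
      (fun j => Sum.map Fin.castSucc Fin.castSucc (π (Sum.inl j))) i
  | Sum.inr i => Fin.lastCases (Sum.inr (Fin.last (d+1)))
      (fun j => Sum.map Fin.castSucc Fin.castSucc (π (Sum.inr j))) i

lemma F_inl_last (π : Equiv.Perm (Fin (d+1) ⊕ Fin (d+1))) :
    F π (Sum.inl (Fin.last (d+1))) = Sum.inl (Fin.last (d+1)) := by simp [F]

lemma F_inr_last (π : Equiv.Perm (Fin (d+1) ⊕ Fin (d+1))) :
    F π (Sum.inr (Fin.last (d+1))) = Sum.inr (Fin.last (d+1)) := by simp [F]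

lemma F_inl_cast (π : Equiv.Perm (Fin (d+1) ⊕ Fin (d+1))) (j : Fin (d+1)) :
    F π (Sum.inl j.castSucc) = Sum.map Fin.castSucc Fin.castSucc (π (Sum.inl j)) := by
  simp [F]

lemma F_inr_cast (π : Equiv.Perm (Fin (d+1) ⊕ Fin (d+1))) (j : Fin (d+1)) :
    F π (Sum.inr j.castSucc) = Sum.map Fin.castSucc Fin.castSucc (π (Sum.inr j)) := by
  simp [F]

lemma F_map (π : Equiv.Perm (Fin (d+1) ⊕ Fin (d+1))) (s : Fin (d+1) ⊕ Fin (d+1)) :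
    F π (Sum.map Fin.castSucc Fin.castSucc s) = Sum.map Fin.castSucc Fin.castSucc (π s) := by
  rcases s with a | a
  · exact F_inl_cast π a
  · exact F_inr_cast π a

lemma F_inv (π : Equiv.Perm (Fin (d+1) ⊕ Fin (d+1))) (s : Fin (d+2) ⊕ Fin (d+2)) :
    F π.symm (F π s) = s := by
  rcases s with i | i <;>
  · induction i using Fin.lastCases with
    | last => simp [F_inl_last, F_inr_last]
    | cast j =>
      first
      | rw [F_inl_cast, F_map, Equiv.symm_apply_apply]
      | rw [F_inr_cast, F_map, Equiv.symm_apply_apply]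
      rfl

def extPerm (π : Equiv.Perm (Fin (d+1) ⊕ Fin (d+1))) :
    Equiv.Perm (Fin (d+2) ⊕ Fin (d+2)) where
  toFun := F π
  invFun := F π.symm
  left_inv := F_inv π
  right_inv := fun s => by simpa using F_inv π.symm s

lemma elim_snoc {N : ℕ} (π : Equiv.Perm (Fin (d+1) ⊕ Fin (d+1)))
    (I J : Fin (d+1) → Fin N) (k : Fin N) :
    (fun m => Sum.elim (Fin.snoc I k) (Fin.snoc J k) (extPerm π (Sum.inl m)))
      = Fin.snoc (fun m => Sum.elim I J (π (Sum.inl m))) k ∧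
    (fun m => Sum.elim (Fin.snoc I k) (Fin.snoc J k) (extPerm π (Sum.inr m)))
      = Fin.snoc (fun m => Sum.elim I J (π (Sum.inr m))) k := by
  constructor <;>
  · funext m
    induction m using Fin.lastCases with
    | last => simp [extPerm, F_inl_last, F_inr_last]
    | cast j =>
      first
      | (show Sum.elim _ _ (extPerm π (Sum.inl j.castSucc)) = _
         rw [show extPerm π (Sum.inl j.castSucc) = Sum.map Fin.castSucc Fin.castSucc (π (Sum.inl j)) from F_inl_cast π j]
         rcases h : π (Sum.inl j) with a | a <;> simp [h])
      | (show Sum.elim _ _ (extPerm π (Sum.inr j.castSucc)) = _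
         rw [show extPerm π (Sum.inr j.castSucc) = Sum.map Fin.castSucc Fin.castSucc (π (Sum.inr j)) from F_inr_cast π j]
         rcases h : π (Sum.inr j) with a | a <;> simp [h])

end StmtAux

set_option maxHeartbeats 1000000 in
/-- Tracing out the last party of a CS state on `(ℂ^N)^{⊗(d+2)}` (so at least two parties)
yields a CS state `σ` on `(ℂ^N)^{⊗(d+1)}`. -/
theorem stmt_15 {N d : ℕ}
    (ρ : Matrix (Fin (d + 2) → Fin N) (Fin (d + 2) → Fin N) ℂ)
    (hpsd : ρ.PosSemidef) (htr : ρ.trace = 1) (hCS : IsCS ρ)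
    (σ : Matrix (Fin (d + 1) → Fin N) (Fin (d + 1) → Fin N) ℂ)
    (hσ : ∀ I' J' : Fin (d + 1) → Fin N,
      σ I' J' = ∑ k : Fin N, ρ (Fin.snoc I' k) (Fin.snoc J' k)) :
    σ.PosSemidef ∧ σ.trace = 1 ∧ IsCS σ := by
  -- the isometries
  set A : Fin N → Matrix (Fin (d+2) → Fin N) (Fin (d+1) → Fin N) ℂ :=
    fun k => Matrix.of fun I I' => if I = Fin.snoc I' k then 1 else 0 with hA
  have hσeq : σ = ∑ k : Fin N, (A k)ᴴ * ρ * A k := by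
    ext I' J'
    rw [hσ]
    simp only [Matrix.sum_apply, Matrix.mul_apply, Matrix.conjTranspose_apply, hA,
      Matrix.of_apply]
    refine Finset.sum_congr rfl fun k _ => ?_
    have hs : ∀ (a b : Fin (d+2) → Fin N), star (if a = b then (1:ℂ) else 0)
        = if a = b then 1 else 0 := fun a b => by split <;> simp
    simp only [hs, ite_mul, one_mul, zero_mul, Finset.sum_ite_eq', Finset.mem_univ, if_true,
      mul_ite, mul_one, mul_zero]
  have hPSD : σ.PosSemidef := by
    rw [hσeq]
    apply Finset.sum_induction _ _ (fun a b ha hb => ha.add hb) Matrix.PosSemidef.zero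
    exact fun k _ => hpsd.conjTranspose_mul_mul_same (A k)
  refine ⟨hPSD, ?_, ?_⟩
  · -- trace
    have : σ.trace = ∑ p : (Fin N) × (∀ _ : Fin (d+1), Fin N),
        ρ (Fin.snoc p.2 p.1) (Fin.snoc p.2 p.1) := by
      rw [Matrix.trace]
      rw [Fintype.sum_prod_type_right]
      simp [Matrix.diag, hσ]
    rw [this, ← htr, Matrix.trace]
    exact Fintype.sum_equiv (Fin.snocEquiv (fun _ => Fin N)) _ _
      (fun p => by simp [Fin.snocEquiv, Matrix.diag])
  · -- CS
    intro π I J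
    rw [hσ, hσ]
    refine Finset.sum_congr rfl fun k _ => ?_
    obtain ⟨h1, h2⟩ := StmtAux.elim_snoc π I J k
    rw [← h1, ← h2]
    exact hCS (StmtAux.extPerm π) (Fin.snoc I k) (Fin.snoc J k)
end

section
/- Complete symmetry and S-separability are invariant under real invertible local operations of the form A^{⊗d}: let A be an invertible real N×N matrix and let B be the matrix indexed by (Fin d → Fin N) × (Fin d → Fin N) with B(I,I') = ∏_k A(I(k), I'(k)). Then for a positive semidefinite matrix ρ on (Fin d → Fin N): (1) ρ is CS if and only if B·ρ·Bᵀ is CS; (2) ρ is S-separable (as a positive combination of real symmetric rank-one products, without trace normalization) if and only if B·ρ·Bᵀ is S-separable. -/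
open scoped ComplexOrder

/-- S-separability: a positive combination of real symmetric rank-one products. -/
def SSep {N d : ℕ} (ρ : Matrix (Fin d → Fin N) (Fin d → Fin N) ℂ) : Prop :=
  ∃ (m : ℕ) (μ : Fin m → ℝ) (x : Fin m → Fin N → ℝ),
    (∀ t, 0 < μ t) ∧ (∀ t, x t ≠ 0) ∧
    ∀ I J, ρ I J = ∑ t, (μ t : ℂ) * ((∏ k, (x t (I k) : ℂ)) * ∏ k, (x t (J k) : ℂ))

namespace Stmt16Aux

variable {N d : ℕ}

def bmat (A : Matrix (Fin N) (Fin N) ℝ) : Matrix (Fin d → Fin N) (Fin d → Fin N) ℂ :=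
  fun I I' => ((∏ k, A (I k) (I' k) : ℝ) : ℂ)

lemma prod_sum_eq {M : Type*} [Fintype M] [DecidableEq M] (f : M → Fin N → ℂ) :
    ∏ k, ∑ j, f k j = ∑ K : M → Fin N, ∏ k, f k (K k) := by
  rw [Finset.prod_univ_sum]
  simp [Fintype.piFinset_univ]

lemma bmat_mul (A A' : Matrix (Fin N) (Fin N) ℝ) :
    (bmat (d := d) (A * A')) = bmat A * bmat A' := by
  ext I I'
  simp only [bmat, Matrix.mul_apply]
  push_cast
  rw [prod_sum_eq]
  apply Finset.sum_congr rfl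
  intro K _
  rw [← Finset.prod_mul_distrib]

lemma bmat_one : (bmat (d := d) (1 : Matrix (Fin N) (Fin N) ℝ)) = 1 := by
  ext I I'
  simp only [bmat, Matrix.one_apply]
  by_cases h : I = I'
  · subst h; simp
  · have : ∃ k, I k ≠ I' k := by
      by_contra hc
      push_neg at hc
      exact h (funext hc)
    obtain ⟨k, hk⟩ := this
    rw [if_neg h, Finset.prod_eq_zero (Finset.mem_univ k)]
    · simp
    · simp [Matrix.one_apply, hk]

lemma conj_apply (A : Matrix (Fin N) (Fin N) ℝ)
    (ρ : Matrix (Fin d → Fin N) (Fin d → Fin N) ℂ) (I J : Fin d → Fin N) :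
    (bmat (d := d) A * ρ * (bmat (d := d) A).transpose) I J
      = ∑ K : Fin d ⊕ Fin d → Fin N,
          (∏ s, (A (Sum.elim I J s) (K s) : ℂ)) *
            ρ (fun k => K (Sum.inl k)) (fun k => K (Sum.inr k)) := by
  have step : (∑ K : Fin d ⊕ Fin d → Fin N,
          (∏ s, (A (Sum.elim I J s) (K s) : ℂ)) *
            ρ (fun k => K (Sum.inl k)) (fun k => K (Sum.inr k)))
      = ∑ p : (Fin d → Fin N) × (Fin d → Fin N),
          (∏ s, (A (Sum.elim I J s) (Sum.elim p.1 p.2 s) : ℂ)) * ρ p.1 p.2 := by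
    apply Fintype.sum_equiv (Equiv.sumArrowEquivProdArrow _ _ _)
    intro K
    simp only [Equiv.sumArrowEquivProdArrow]
    congr 1
    apply Finset.prod_congr rfl
    intro s _
    cases s <;> rfl
  rw [step, Fintype.sum_prod_type]
  simp only [Matrix.mul_apply, Matrix.transpose_apply, Finset.sum_mul]
  rw [Finset.sum_comm]
  apply Finset.sum_congr rfl
  intro I' _
  apply Finset.sum_congr rfl
  intro J' _
  rw [Fintype.prod_sum_type]
  simp only [Sum.elim_inl, Sum.elim_inr, bmat]
  push_cast
  ring

def precomp (π : Equiv.Perm (Fin d ⊕ Fin d)) :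
    (Fin d ⊕ Fin d → Fin N) ≃ (Fin d ⊕ Fin d → Fin N) where
  toFun K := K ∘ π
  invFun K := K ∘ π.symm
  left_inv K := by ext s; simp
  right_inv K := by ext s; simp

lemma cs_forward (A : Matrix (Fin N) (Fin N) ℝ)
    (ρ : Matrix (Fin d → Fin N) (Fin d → Fin N) ℂ) (h : IsCS ρ) :
    IsCS (bmat (d := d) A * ρ * (bmat (d := d) A).transpose) := by
  intro π I J
  rw [conj_apply, conj_apply]
  conv_lhs => rw [← Equiv.sum_comp (precomp (N := N) π)
    (fun K : Fin d ⊕ Fin d → Fin N =>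
      (∏ s, (A (Sum.elim (fun k => Sum.elim I J (π (Sum.inl k)))
          (fun k => Sum.elim I J (π (Sum.inr k))) s) (K s) : ℂ)) *
        ρ (fun k => K (Sum.inl k)) (fun k => K (Sum.inr k)))]
  apply Finset.sum_congr rfl
  intro K _
  simp only [precomp, Equiv.coe_fn_mk, Function.comp]
  have hprod : (∏ s, (A (Sum.elim (fun k => Sum.elim I J (π (Sum.inl k)))
      (fun k => Sum.elim I J (π (Sum.inr k))) s) (K (π s)) : ℂ))
      = ∏ s, (A (Sum.elim I J s) (K s) : ℂ) := by
    have h1 : ∀ s, (A (Sum.elim (fun k => Sum.elim I J (π (Sum.inl k)))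
        (fun k => Sum.elim I J (π (Sum.inr k))) s) (K (π s)) : ℂ)
        = (fun s => (A (Sum.elim I J s) (K s) : ℂ)) (π s) := by
      intro s; cases s <;> rfl
    rw [Finset.prod_congr rfl (fun s _ => h1 s)]
    exact Equiv.prod_comp π (fun s => (A (Sum.elim I J s) (K s) : ℂ))
  rw [hprod]
  congr 1
  have hK : Sum.elim (fun k => K (Sum.inl k)) (fun k => K (Sum.inr k)) = K := by
    ext s; cases s <;> rfl
  have h2 := h π (fun k => K (Sum.inl k)) (fun k => K (Sum.inr k))
  rw [hK] at h2
  exact h2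

lemma bmat_sum (A : Matrix (Fin N) (Fin N) ℝ) (x : Fin N → ℝ) (I : Fin d → Fin N) :
    ∑ I' : Fin d → Fin N, bmat (d := d) A I I' * ∏ k, (x (I' k) : ℂ)
      = ∏ k, ((A.mulVec x) (I k) : ℂ) := by
  have h1 : ∀ k : Fin d, ((A.mulVec x) (I k) : ℂ) = ∑ j, (A (I k) j : ℂ) * (x j : ℂ) := by
    intro k
    simp only [Matrix.mulVec, dotProduct]
    push_cast
    rfl
  rw [Finset.prod_congr rfl (fun k _ => h1 k), prod_sum_eq]
  apply Finset.sum_congr rfl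
  intro I' _
  simp only [bmat]
  push_cast
  rw [← Finset.prod_mul_distrib]

lemma ssep_forward (A : Matrix (Fin N) (Fin N) ℝ) (hA : IsUnit A)
    (ρ : Matrix (Fin d → Fin N) (Fin d → Fin N) ℂ) (h : SSep ρ) :
    SSep (bmat (d := d) A * ρ * (bmat (d := d) A).transpose) := by
  obtain ⟨m, μ, x, hμ, hx, hρ⟩ := h
  refine ⟨m, μ, fun t => A.mulVec (x t), hμ, ?_, ?_⟩
  · intro t hzero
    apply hx t
    have hdet : IsUnit A.det := (Matrix.isUnit_iff_isUnit_det A).mp hA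
    have := congrArg (A⁻¹.mulVec) hzero
    rwa [Matrix.mulVec_mulVec, Matrix.nonsing_inv_mul A hdet, Matrix.one_mulVec,
      Matrix.mulVec_zero] at this
  intro I J
  have expand : (bmat (d := d) A * ρ * (bmat (d := d) A).transpose) I J
      = ∑ I' : Fin d → Fin N, ∑ J' : Fin d → Fin N,
          bmat (d := d) A I I' * ρ I' J' * bmat (d := d) A J J' := by
    simp only [Matrix.mul_apply, Matrix.transpose_apply, Finset.sum_mul]
    rw [Finset.sum_comm]
  rw [expand]
  have step : ∀ I' J' : Fin d → Fin N,
      bmat (d := d) A I I' * ρ I' J' * bmat (d := d) A J J'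
      = ∑ t, (μ t : ℂ) * ((bmat (d := d) A I I' * ∏ k, (x t (I' k) : ℂ)) *
          (bmat (d := d) A J J' * ∏ k, (x t (J' k) : ℂ))) := by
    intro I' J'
    rw [hρ, Finset.mul_sum, Finset.sum_mul]
    apply Finset.sum_congr rfl
    intro t _
    ring
  rw [Finset.sum_congr rfl (fun I' _ => Finset.sum_congr rfl (fun J' _ => step I' J'))]
  rw [Finset.sum_congr rfl (fun I' _ => Finset.sum_comm), Finset.sum_comm]
  apply Finset.sum_congr rfl
  intro t _
  rw [← bmat_sum A (x t) I, ← bmat_sum A (x t) J, Finset.sum_mul_sum, Finset.mul_sum]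
  apply Finset.sum_congr rfl
  intro I' _
  rw [Finset.mul_sum]

lemma cancel (A : Matrix (Fin N) (Fin N) ℝ) (hA : IsUnit A)
    (ρ : Matrix (Fin d → Fin N) (Fin d → Fin N) ℂ) :
    bmat (d := d) A⁻¹ * (bmat (d := d) A * ρ * (bmat (d := d) A).transpose) *
      (bmat (d := d) A⁻¹).transpose = ρ := by
  have hdet : IsUnit A.det := (Matrix.isUnit_iff_isUnit_det A).mp hA
  have h1 : bmat (d := d) A⁻¹ * bmat (d := d) A = 1 := by
    rw [← bmat_mul, Matrix.nonsing_inv_mul A hdet, bmat_one]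
  have h2 : (bmat (d := d) A).transpose * (bmat (d := d) A⁻¹).transpose = 1 := by
    rw [← Matrix.transpose_mul, h1, Matrix.transpose_one]
  calc bmat (d := d) A⁻¹ * (bmat (d := d) A * ρ * (bmat (d := d) A).transpose) *
        (bmat (d := d) A⁻¹).transpose
      = (bmat (d := d) A⁻¹ * bmat (d := d) A) * ρ *
          ((bmat (d := d) A).transpose * (bmat (d := d) A⁻¹).transpose) := by
        simp only [Matrix.mul_assoc]
    _ = ρ := by rw [h1, h2, Matrix.one_mul, Matrix.mul_one]

end Stmt16Aux

/-- CS and S-separability are invariant under real invertible local operations `A^{⊗d}`. -/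
theorem stmt_16 {N d : ℕ} (A : Matrix (Fin N) (Fin N) ℝ) (hA : IsUnit A)
    (B : Matrix (Fin d → Fin N) (Fin d → Fin N) ℂ)
    (hB : ∀ I I' : Fin d → Fin N, B I I' = ((∏ k, A (I k) (I' k) : ℝ) : ℂ))
    (ρ : Matrix (Fin d → Fin N) (Fin d → Fin N) ℂ) (hpsd : ρ.PosSemidef) :
    (IsCS ρ ↔ IsCS (B * ρ * B.transpose)) ∧
    (SSep ρ ↔ SSep (B * ρ * B.transpose)) := by
  have hBe : B = Stmt16Aux.bmat (d := d) A := by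
    ext I I'
    rw [hB]
    rfl
  subst hBe
  refine ⟨⟨fun h => Stmt16Aux.cs_forward A ρ h, fun h => ?_⟩,
    fun h => Stmt16Aux.ssep_forward A hA ρ h, fun h => ?_⟩
  · have := Stmt16Aux.cs_forward A⁻¹ _ h
    rwa [Stmt16Aux.cancel A hA ρ] at this
  · have := Stmt16Aux.ssep_forward A⁻¹ (Matrix.isUnit_nonsing_inv_iff.mpr hA) _ h
    rwa [Stmt16Aux.cancel A hA ρ] at this
end
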